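/- arXiv:2306.01448 — 10 statements merged into one kernel-verified Lean document; each statement's English description precedes it below -/
import Mathlib

section
/- Let d ≥ 2, r > 0, and let F : C → ℝ^d be continuous and satisfy the local Lipschitz condition: for every M > 0 there exists K > 0 such that ‖F(ψ₁) − F(ψ₂)‖ ≤ K‖ψ₁ − ψ₂‖_C whenever ‖ψ₁‖_C ≤ M and ‖ψ₂‖_C ≤ M. Assume moreover that for every ψ ∈ C with ψ(θ) ∈ Δ_d for all θ ∈ [−r,0]: (i) F_i(ψ) ≥ 0 whenever the i-th component of ψ(0) is 0, and (ii) ∑_{i=1}^d F_i(ψ) = 0. Then for every φ ∈ C with φ(θ) ∈ Δ_d for all θ ∈ [−r,0] there exists a unique continuous function x : [−r,∞) → ℝ^d such that x(θ) = φ(θ) for θ ∈ [−r,0], x is differentiable on (0,∞) with x′(t) = F(x_t) for all t > 0, and moreover x(t) ∈ Δ_d for all t ≥ 0. -/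
/-!
Replace `F` by `G ψ = F (P ∘ ψ)`, where `P = simplexProj` is the Euclidean projection onto the
simplex, `P v = (v - μ)⁺` with the level `μ = simplexLevel v` fixed by `∑ i, P v i = 1`. The level
is 1-Lipschitz for the max norm, so `P` is 2-Lipschitz and `G` is globally Lipschitz on segments;
the method of steps (a `1/2`-contraction on intervals of length `(2K)⁻¹`) gives a global solution,
and the same Lipschitz bound gives uniqueness. The field `G` has zero sum, and `∑ i, v i = 1` forces
`μ ≥ 0`, so `P v` vanishes on the negative coordinates of `v`: along a solution `∑ i, x t i = 1` is
conserved and no coordinate can become negative. On simplex-valued segments `G = F`.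
-/

open Set

/-- The segment of `z` at time `s`: `θ ↦ z(s+θ)`, with `θ` clamped to the delay window
`[-r, 0]` (so that the segment represents an element of `C([-r,0], ℝ^d)`). -/
def seg {d : ℕ} (r : ℝ) (z : ℝ → Fin d → ℝ) (s : ℝ) : ℝ → Fin d → ℝ :=
  fun θ => z (s + max (min θ 0) (-r))

open scoped BoundedContinuousFunction

section SimplexProjection

variable {ι : Type*} [Fintype ι]

lemma exists_sum_max_sub_eq_one [Nonempty ι] (v : ι → ℝ) :
    ∃ μ, ∑ i, max (v i - μ) 0 = 1 := by
  obtain ⟨i₀⟩ := ‹Nonempty ι›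
  have hcont : Continuous fun μ : ℝ => ∑ i, max (v i - μ) 0 := by fun_prop
  have hlow : 1 ≤ ∑ i, max (v i - (v i₀ - 1)) 0 :=
    calc (1 : ℝ) = max (v i₀ - (v i₀ - 1)) 0 := by norm_num
      _ ≤ ∑ i, max (v i - (v i₀ - 1)) 0 :=
        Finset.single_le_sum (f := fun i => max (v i - (v i₀ - 1)) 0)
          (fun i _ => le_max_right _ _) (Finset.mem_univ i₀)
  have hhigh : ∑ i, max (v i - ‖v‖) 0 = 0 :=
    Finset.sum_eq_zero fun i _ =>
      max_eq_right (sub_nonpos.2 ((le_abs_self _).trans (norm_le_pi_norm v i)))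
  have hle : v i₀ - 1 ≤ ‖v‖ := by
    linarith [(le_abs_self (v i₀)).trans (norm_le_pi_norm v i₀)]
  obtain ⟨μ, -, hμ⟩ := intermediate_value_Icc' hle hcont.continuousOn
    ⟨hhigh.le.trans zero_le_one, hlow⟩
  exact ⟨μ, hμ⟩

lemma le_add_of_sum_max_sub_eq_one {v w : ι → ℝ} {μ ν c : ℝ}
    (hv : ∑ i, max (v i - μ) 0 = 1) (hw : ∑ i, max (w i - ν) 0 = 1) (h : ∀ i, v i ≤ w i + c) :
    μ ≤ ν + c := by
  by_contra! hlt
  obtain ⟨i, -, hi⟩ : ∃ i ∈ Finset.univ, 0 < max (w i - ν) 0 := by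
    by_contra! hnonpos
    linarith [Finset.sum_nonpos hnonpos]
  have hvw : ∀ j, v j - μ < w j - ν := fun j => by linarith [h j]
  have : ∑ i, max (v i - μ) 0 < ∑ i, max (w i - ν) 0 :=
    Finset.sum_lt_sum (fun j _ => max_le_max (hvw j).le le_rfl)
      ⟨i, Finset.mem_univ i, max_lt ((hvw i).trans_le (le_max_left _ _)) hi⟩
  linarith

noncomputable def simplexLevel [Nonempty ι] (v : ι → ℝ) : ℝ :=
  (exists_sum_max_sub_eq_one v).choose

noncomputable def simplexProj [Nonempty ι] (v : ι → ℝ) : ι → ℝ :=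
  fun i => max (v i - simplexLevel v) 0

variable [Nonempty ι]

lemma sum_simplexProj (v : ι → ℝ) : ∑ i, simplexProj v i = 1 :=
  (exists_sum_max_sub_eq_one v).choose_spec

lemma simplexProj_mem (v : ι → ℝ) : simplexProj v ∈ stdSimplex ℝ ι :=
  ⟨fun _ => le_max_right _ _, sum_simplexProj v⟩

lemma simplexLevel_eq {v : ι → ℝ} {μ : ℝ} (h : ∑ i, max (v i - μ) 0 = 1) :
    simplexLevel v = μ :=
  le_antisymm (by simpa using le_add_of_sum_max_sub_eq_one (sum_simplexProj v) h (c := 0) (by simp))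
    (by simpa using le_add_of_sum_max_sub_eq_one h (sum_simplexProj v) (c := 0) (by simp))

lemma simplexProj_eq_self {v : ι → ℝ} (hv : v ∈ stdSimplex ℝ ι) : simplexProj v = v := by
  have hμ : simplexLevel v = 0 := simplexLevel_eq (by simpa [max_eq_left (hv.1 _)] using hv.2)
  funext i
  simp [simplexProj, hμ, hv.1 i]

lemma simplexProj_apply_eq_zero {v : ι → ℝ} (hv : ∑ i, v i = 1) {i : ι} (hi : v i ≤ 0) :
    simplexProj v i = 0 := by
  have hμ : 0 ≤ simplexLevel v := by
    by_contra! hneg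
    have hcard : (0 : ℝ) < Fintype.card ι := by exact_mod_cast Fintype.card_pos
    have : ∑ i, (v i - simplexLevel v) ≤ ∑ i, simplexProj v i :=
      Finset.sum_le_sum fun j _ => le_max_left _ _
    rw [Finset.sum_sub_distrib, hv, sum_simplexProj, Finset.sum_const, Finset.card_univ,
      nsmul_eq_mul] at this
    nlinarith
  exact max_eq_right (by linarith)

lemma abs_simplexLevel_sub_le (v w : ι → ℝ) : |simplexLevel v - simplexLevel w| ≤ ‖v - w‖ := by
  have hle : ∀ v w : ι → ℝ, simplexLevel v ≤ simplexLevel w + ‖v - w‖ := fun v w =>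
    le_add_of_sum_max_sub_eq_one (sum_simplexProj v) (sum_simplexProj w) fun i => by
      linarith [(le_abs_self (v i - w i)).trans (norm_le_pi_norm (v - w) i)]
  rw [abs_sub_le_iff]
  exact ⟨by linarith [hle v w], by linarith [hle w v, norm_sub_rev v w]⟩

lemma lipschitzWith_simplexProj : LipschitzWith 2 (simplexProj (ι := ι)) := by
  refine LipschitzWith.of_dist_le_mul fun v w => ?_
  rw [dist_eq_norm, dist_eq_norm, NNReal.coe_ofNat]
  refine (pi_norm_le_iff_of_nonneg (by positivity)).2 fun i => ?_
  calc ‖(simplexProj v - simplexProj w) i‖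
      ≤ |(v i - simplexLevel v) - (w i - simplexLevel w)| := abs_max_sub_max_le_abs _ _ _
    _ ≤ |v i - w i| + |simplexLevel v - simplexLevel w| := by
        rw [sub_sub_sub_comm]; exact abs_sub _ _
    _ ≤ ‖v - w‖ + ‖v - w‖ :=
        add_le_add (norm_le_pi_norm (v - w) i) (abs_simplexLevel_sub_le v w)
    _ = 2 * ‖v - w‖ := by ring

end SimplexProjection

lemma nonneg_of_hasDerivAt_nonneg_of_neg {f f' : ℝ → ℝ} {a : ℝ} (hf : ContinuousOn f (Ici a))
    (hd : ∀ t > a, HasDerivAt f (f' t) t) (ha : 0 ≤ f a) (h : ∀ t > a, f t < 0 → 0 ≤ f' t) :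
    ∀ t ≥ a, 0 ≤ f t := by
  intro b hb
  by_contra! hfb
  set S := Icc a b ∩ f ⁻¹' Ici 0
  have hS : IsClosed S := hf.mono Icc_subset_Ici_self |>.preimage_isClosed_of_isClosed
    isClosed_Icc isClosed_Ici
  have haS : a ∈ S := ⟨⟨le_rfl, hb⟩, ha⟩
  have hbdd : BddAbove S := ⟨b, fun t ht => ht.1.2⟩
  obtain ⟨⟨hac, hcb⟩, hfc⟩ : sSup S ∈ S := hS.csSup_mem ⟨a, haS⟩ hbdd
  set c := sSup S
  have hneg : ∀ t ∈ Ioc c b, f t < 0 := fun t ht => by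
    by_contra! hft
    exact ht.1.not_ge (le_csSup hbdd ⟨⟨hac.trans ht.1.le, ht.2⟩, hft⟩)
  have hcb' : c < b := lt_of_le_of_ne hcb fun h => by simp only [h] at hfc; exact hfb.not_ge hfc
  obtain ⟨ξ, hξ, hslope⟩ := exists_hasDerivAt_eq_slope f f' hcb'
    (hf.mono fun t ht => hac.trans ht.1) fun t ht => hd t (hac.trans_lt ht.1)
  have : 0 ≤ (f b - f c) / (b - c) :=
    hslope ▸ h ξ (hac.trans_lt hξ.1) (hneg ξ ⟨hξ.1, hξ.2.le⟩)
  have hfc : 0 ≤ f c := hfc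
  linarith [(le_div_iff₀ (sub_pos.2 hcb')).1 this]

lemma eq_of_hasDerivAt_zero {f : ℝ → ℝ} {a : ℝ} (hf : ContinuousOn f (Ici a))
    (hd : ∀ t > a, HasDerivAt f 0 t) : ∀ t ≥ a, f t = f a := by
  intro t ht
  rcases ht.eq_or_lt with rfl | hlt
  · rfl
  obtain ⟨ξ, -, hslope⟩ := exists_hasDerivAt_eq_slope f (fun _ => 0) hlt
    (hf.mono Icc_subset_Ici_self) fun s hs => hd s hs.1
  rw [eq_comm, div_eq_zero_iff, sub_eq_zero] at hslope
  exact hslope.resolve_right (by linarith)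

lemma mem_stdSimplex_of_hasDerivAt {ι : Type*} [Fintype ι] {x x' : ℝ → ι → ℝ}
    (hx : ContinuousOn x (Ici 0)) (hd : ∀ t > 0, HasDerivAt x (x' t) t)
    (h0 : x 0 ∈ stdSimplex ℝ ι) (hsum : ∀ t > 0, ∑ i, x' t i = 0)
    (hpos : ∀ t > 0, ∑ j, x t j = 1 → ∀ i, x t i < 0 → 0 ≤ x' t i) :
    ∀ t ≥ 0, x t ∈ stdSimplex ℝ ι := by
  have hcoord : ∀ i, ContinuousOn (fun t => x t i) (Ici 0) := fun i =>
    (continuous_apply i).comp_continuousOn hx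
  have hsum_one : ∀ t ≥ 0, ∑ j, x t j = 1 := by
    intro t ht
    rw [← h0.2]
    refine eq_of_hasDerivAt_zero (continuousOn_finsetSum _ fun i _ => hcoord i) ?_ t ht
    intro s hs
    simpa only [hsum s hs] using
      HasDerivAt.fun_sum (u := Finset.univ) fun i _ => hasDerivAt_pi.1 (hd s hs) i
  refine fun t ht => ⟨fun i => ?_, hsum_one t ht⟩
  exact nonneg_of_hasDerivAt_nonneg_of_neg (hcoord i) (fun s hs => hasDerivAt_pi.1 (hd s hs) i)
    (h0.1 i) (fun s hs => hpos s hs (hsum_one s hs.le) i) t ht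

lemma norm_sub_le_of_norm_hasDerivAt_le {ι : Type*} [Fintype ι] {f f' : ℝ → ι → ℝ} {a b C : ℝ}
    (hab : a ≤ b) (hf : ContinuousOn f (Icc a b)) (hd : ∀ t ∈ Ioo a b, HasDerivAt f (f' t) t)
    (hC : ∀ t ∈ Ioo a b, ‖f' t‖ ≤ C) : ‖f b - f a‖ ≤ C * (b - a) := by
  rcases hab.eq_or_lt with rfl | hlt
  · simp
  have hC0 : 0 ≤ C := by
    obtain ⟨t, ht⟩ := nonempty_Ioo.2 hlt
    exact (norm_nonneg _).trans (hC t ht)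
  refine (pi_norm_le_iff_of_nonneg (by nlinarith)).2 fun i => ?_
  obtain ⟨ξ, hξ, hslope⟩ := exists_hasDerivAt_eq_slope (fun t => f t i) (fun t => f' t i) hlt
    ((continuous_apply i).comp_continuousOn hf) fun t ht => hasDerivAt_pi.1 (hd t ht) i
  rw [eq_div_iff (sub_ne_zero.2 hlt.ne')] at hslope
  calc ‖(f b - f a) i‖ = ‖f' ξ i‖ * (b - a) := by
        rw [Pi.sub_apply, ← hslope, norm_mul, Real.norm_of_nonneg (sub_nonneg.2 hab)]
    _ ≤ C * (b - a) :=
        mul_le_mul_of_nonneg_right ((norm_le_pi_norm _ i).trans (hC ξ hξ)) (sub_nonneg.2 hab)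

lemma forall_of_forall_le_add {P : ℝ → Prop} {η : ℝ} (hη : 0 < η) (h0 : ∀ t ≤ 0, P t)
    (hstep : ∀ a ≥ 0, (∀ t ≤ a, P t) → ∀ t ≤ a + η, P t) : ∀ t, P t := by
  have hn : ∀ n : ℕ, ∀ t ≤ n * η, P t := by
    intro n
    induction n with
    | zero => simpa using h0
    | succ n ih => simpa [add_mul] using hstep (n * η) (by positivity) ih
  intro t
  exact hn ⌈t / η⌉₊ t ((div_le_iff₀ hη).1 (Nat.le_ceil _))

section IntervalIntegral

variable {E : Type*} [NormedAddCommGroup E] [NormedSpace ℝ E] {f g : ℝ → E}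

lemma eq_add_integral_of_steps (hg : Continuous g) {η : ℝ} (hη : 0 < η)
    (h : ∀ n : ℕ, ∀ t ∈ Icc (n * η) ((n + 1) * η), f t = f (n * η) + ∫ s in n * η..t, g s) :
    ∀ t ≥ 0, f t = f 0 + ∫ s in 0..t, g s := by
  have hn : ∀ n : ℕ, ∀ t ∈ Icc 0 (n * η), f t = f 0 + ∫ s in 0..t, g s := by
    intro n
    induction n with
    | zero =>
      intro t ht
      obtain rfl : t = 0 := by simpa using ht
      simp
    | succ n ih =>
      intro t ht
      rcases le_total t (n * η) with htn | htn
      · exact ih t ⟨ht.1, htn⟩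
      rw [h n t ⟨htn, by exact_mod_cast ht.2⟩, ih _ ⟨by positivity, le_rfl⟩, add_assoc,
        intervalIntegral.integral_add_adjacent_intervals (hg.intervalIntegrable _ _)
          (hg.intervalIntegrable _ _)]
  exact fun t ht => hn ⌈t / η⌉₊ t ⟨ht, (div_le_iff₀ hη).1 (Nat.le_ceil _)⟩

lemma hasDerivAt_of_eq_add_integral [CompleteSpace E] (hg : Continuous g)
    (h : ∀ t ≥ 0, f t = f 0 + ∫ s in 0..t, g s) {t : ℝ} (ht : 0 < t) : HasDerivAt f (g t) t := by
  refine ((hg.integral_hasStrictDerivAt 0 t).hasDerivAt.const_add (f 0)).congr_of_eventuallyEq ?_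
  filter_upwards [Ioi_mem_nhds ht] with s hs using h s (le_of_lt hs)

end IntervalIntegral

lemma BoundedContinuousFunction.isClosed_setOf_eqOn {α β : Type*} [TopologicalSpace α]
    [MetricSpace β] (w : α →ᵇ β) (s : Set α) : IsClosed {u : α →ᵇ β | EqOn u w s} := by
  simp only [EqOn, ofPred_forall]
  exact isClosed_iInter fun t => isClosed_iInter fun _ => isClosed_eq
    ((continuous_apply t).comp BoundedContinuousFunction.continuous_coe) continuous_const

section Segment

variable {d : ℕ} {r : ℝ}

lemma add_clamp_mem_Icc (hr : 0 ≤ r) (s θ : ℝ) : s + max (min θ 0) (-r) ∈ Icc (s - r) s :=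
  ⟨by linarith [le_max_right (min θ 0) (-r)],
    by linarith [max_le (min_le_right θ 0) (neg_nonpos.2 hr)]⟩

lemma seg_apply_of_mem (z : ℝ → Fin d → ℝ) (s : ℝ) {θ : ℝ} (hθ : θ ∈ Icc (-r) 0) :
    seg r z s θ = z (s + θ) := by
  rw [seg, min_eq_left hθ.2, max_eq_left hθ.1]

lemma seg_congr (hr : 0 ≤ r) {z z' : ℝ → Fin d → ℝ} {s : ℝ}
    (h : EqOn z z' (Icc (s - r) s)) : seg r z s = seg r z' s :=
  funext fun θ => h (add_clamp_mem_Icc hr s θ)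

lemma continuous_seg (hr : 0 ≤ r) {z : ℝ → Fin d → ℝ} {s : ℝ}
    (hz : ContinuousOn z (Icc (s - r) s)) : Continuous (seg r z s) :=
  hz.comp_continuous (by fun_prop) (add_clamp_mem_Icc hr s)

end Segment

def SegLipschitzWith {d : ℕ} (r K : ℝ) (G : (ℝ → Fin d → ℝ) → Fin d → ℝ) : Prop :=
  ∀ (z z' : ℝ → Fin d → ℝ) (s C : ℝ), ContinuousOn z (Icc (s - r) s) →
    ContinuousOn z' (Icc (s - r) s) → (∀ u ∈ Icc (s - r) s, ‖z u - z' u‖ ≤ C) →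
    ‖G (seg r z s) - G (seg r z' s)‖ ≤ K * C

namespace SegLipschitzWith

variable {d : ℕ} {r K : ℝ} {G : (ℝ → Fin d → ℝ) → Fin d → ℝ}

lemma continuous_comp_seg (hG : SegLipschitzWith r K G) {z : ℝ → Fin d → ℝ} (hz : Continuous z) :
    Continuous fun s => G (seg r z s) := by
  refine continuous_iff_continuousAt.2 fun s₀ => Metric.tendsto_nhds.2 fun ε hε => ?_
  have hunif := Metric.tendstoUniformly_iff.1
    (Continuous.tendstoUniformly (fun s (θ : Icc (-r) 0) => z (s + θ)) (by fun_prop) s₀)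
    (ε / (|K| + 1)) (by positivity)
  filter_upwards [hunif] with s hs
  have hshift : seg r z s₀ = seg r (fun u => z (u + (s₀ - s))) s := by
    funext θ; simp only [seg]; ring_nf
  rw [dist_eq_norm, hshift]
  refine (hG _ _ s (ε / (|K| + 1)) hz.continuousOn (by fun_prop) fun u hu => ?_).trans_lt ?_
  · have h := hs ⟨u - s, by constructor <;> linarith [hu.1, hu.2]⟩
    rw [dist_comm, dist_eq_norm, add_sub_cancel] at h
    rw [show u + (s₀ - s) = s₀ + (u - s) by ring]
    exact h.le
  · calc K * (ε / (|K| + 1)) ≤ |K| * (ε / (|K| + 1)) := by gcongr; exact le_abs_self K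
      _ < ε := by rw [mul_div_assoc', div_lt_iff₀ (by positivity)]; nlinarith

lemma norm_apply_seg_le (hG : SegLipschitzWith r K G) (u : ℝ →ᵇ (Fin d → ℝ)) (s : ℝ) :
    ‖G (seg r u s)‖ ≤ ‖G 0‖ + K * ‖u‖ := by
  have h := hG u 0 s ‖u‖ u.continuous.continuousOn continuousOn_const fun v _ => by
    simpa using u.norm_coe_le_norm v
  have h0 : seg r (0 : ℝ → Fin d → ℝ) s = 0 := rfl
  rw [h0] at h
  linarith [norm_le_insert' (G (seg r u s)) (G 0)]

open intervalIntegral in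
lemma exists_step (hG : SegLipschitzWith r K G) (hK : 0 < K) (t₀ : ℝ) (w : ℝ →ᵇ (Fin d → ℝ)) :
    ∃ u : ℝ →ᵇ (Fin d → ℝ), (∀ t ≤ t₀, u t = w t) ∧
      ∀ t ∈ Icc t₀ (t₀ + (2 * K)⁻¹), u t = w t₀ + ∫ s in t₀..t, G (seg r u s) := by
  set η := (2 * K)⁻¹
  have hη : 0 < η := by positivity
  set S : Set (ℝ →ᵇ (Fin d → ℝ)) := {u | EqOn u w (Iic t₀)}
  set τ : ℝ → ℝ := fun t => max t₀ (min t (t₀ + η))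
  have hτ : ∀ t, |τ t - t₀| ≤ η := fun t => by
    rw [abs_of_nonneg (sub_nonneg.2 (le_max_left _ _))]
    linarith [max_le (by linarith : t₀ ≤ t₀ + η) (min_le_right t (t₀ + η))]
  have hGu := fun u : ℝ →ᵇ (Fin d → ℝ) => hG.continuous_comp_seg u.continuous
  -- the Picard operator, frozen after `t₀ + η`; it is a `1/2`-contraction because `K * η = 1/2`
  let Φ : (ℝ →ᵇ (Fin d → ℝ)) → ℝ →ᵇ (Fin d → ℝ) := fun u =>
    .ofNormedAddCommGroup (fun t => w (min t t₀) + ∫ s in t₀..τ t, G (seg r u s))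
      ((w.continuous.comp (by fun_prop)).add
        ((continuous_primitive (fun a b => (hGu u).intervalIntegrable a b) t₀).comp
          (by fun_prop)))
      (‖w‖ + (‖G 0‖ + K * ‖u‖) * η) fun t => (norm_add_le _ _).trans <| add_le_add
        (w.norm_coe_le_norm _)
        ((norm_integral_le_of_norm_le_const fun s _ => hG.norm_apply_seg_le u s).trans
          (mul_le_mul_of_nonneg_left (hτ t) ((norm_nonneg _).trans (hG.norm_apply_seg_le u 0))))
  have hΦS : MapsTo Φ S S := fun u _ t (ht : t ≤ t₀) => by
    simp [Φ, τ, min_eq_left ht, max_eq_left (min_le_of_left_le ht)]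
  have hΦ : ∀ u v, dist (Φ u) (Φ v) ≤ 2⁻¹ * dist u v := fun u v => by
    refine (BoundedContinuousFunction.dist_le (by positivity)).2 fun t => ?_
    simp only [Φ, BoundedContinuousFunction.coe_ofNormedAddCommGroup]
    rw [dist_add_left, dist_eq_norm,
      ← integral_sub ((hGu u).intervalIntegrable _ _) ((hGu v).intervalIntegrable _ _)]
    calc _ ≤ K * dist u v * |τ t - t₀| := norm_integral_le_of_norm_le_const fun s _ =>
          hG u v s _ u.continuous.continuousOn v.continuous.continuousOn fun x _ => by
            rw [← dist_eq_norm]; exact BoundedContinuousFunction.dist_coe_le_dist x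
      _ ≤ K * dist u v * η := by gcongr; exact hτ t
      _ = 2⁻¹ * dist u v := by simp only [η]; field_simp
  have hcontr : ContractingWith 2⁻¹ (hΦS.restrict Φ S S) :=
    ⟨by rw [← NNReal.coe_lt_coe]; norm_num,
      LipschitzWith.of_dist_le_mul fun u v => by
        rw [NNReal.coe_inv, NNReal.coe_ofNat]; exact hΦ u v⟩
  obtain ⟨u, huS, hfix, -⟩ := hcontr.exists_fixedPoint'
    (BoundedContinuousFunction.isClosed_setOf_eqOn w _).isComplete hΦS (x := w)
    (fun _ _ => rfl) (edist_ne_top _ _)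
  refine ⟨u, fun t ht => huS ht, fun t ht => ?_⟩
  rw [← DFunLike.congr_fun hfix t]
  simp [Φ, τ, min_eq_right ht.1, min_eq_left ht.2, max_eq_right ht.1]

lemma exists_solution_of_boundedContinuousFunction (hG : SegLipschitzWith r K G) (hr : 0 ≤ r)
    (hK : 0 < K) (w : ℝ →ᵇ (Fin d → ℝ)) :
    ∃ x : ℝ → Fin d → ℝ, Continuous x ∧ (∀ t ≤ 0, x t = w t) ∧
      ∀ t > 0, HasDerivAt x (G (seg r x t)) t := by
  set η := (2 * K)⁻¹
  have hη : 0 < η := by positivity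
  choose step hstep_le hstep_eq using hG.exists_step hK
  let u : ℕ → ℝ →ᵇ (Fin d → ℝ) := fun n => Nat.rec w (fun n un => step (n * η) un) n
  have hu_le : ∀ m n : ℕ, m ≤ n → ∀ t ≤ m * η, u n t = u m t := by
    intro m n hmn
    induction n, hmn using Nat.le_induction with
    | base => exact fun _ _ => rfl
    | succ n hmn ih =>
      intro t ht
      rw [← ih t ht]
      exact hstep_le _ _ t (ht.trans (by gcongr))
  let N : ℝ → ℕ := fun t => ⌈t / η⌉₊
  have hN : ∀ t, t < (N t + 1 : ℕ) * η := fun t => by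
    push_cast
    linarith [(div_le_iff₀ hη).1 (Nat.le_ceil (t / η))]
  let x : ℝ → Fin d → ℝ := fun t => u (N t) t
  have hx : ∀ n : ℕ, ∀ t ≤ n * η, x t = u n t := fun n t ht => by
    rcases le_total (N t) n with h | h
    · exact (hu_le _ _ h t ((div_le_iff₀ hη).1 (Nat.le_ceil _))).symm
    · exact hu_le _ _ h t ht
  have hx_nhds : ∀ t, x =ᶠ[nhds t] u (N t + 1) := fun t => by
    filter_upwards [Iio_mem_nhds (hN t)] with s hs using hx _ s hs.le
  have hxc : Continuous x := continuous_iff_continuousAt.2 fun t =>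
    (u (N t + 1)).continuous.continuousAt.congr (hx_nhds t).symm
  have hsteps : ∀ n : ℕ, ∀ t ∈ Icc (n * η) ((n + 1) * η),
      x t = x (n * η) + ∫ s in n * η..t, G (seg r x s) := by
    intro n t ht
    rw [hx (n + 1) t (by exact_mod_cast ht.2), hx n _ le_rfl]
    refine (hstep_eq _ _ t ⟨ht.1, ht.2.trans_eq (by simp [η, add_mul])⟩).trans ?_
    congr 1
    refine intervalIntegral.integral_congr fun s hs =>
      congrArg G (seg_congr hr fun v hv => (hx (n + 1) v ?_).symm)
    rw [uIcc_of_le ht.1] at hs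
    exact_mod_cast hv.2.trans (hs.2.trans ht.2)
  have hint := eq_add_integral_of_steps (hG.continuous_comp_seg hxc) hη hsteps
  refine ⟨x, hxc, fun t ht => hx 0 t (by simpa using ht), fun t ht => ?_⟩
  exact hasDerivAt_of_eq_add_integral (hG.continuous_comp_seg hxc) hint ht

lemma exists_solution (hG : SegLipschitzWith r K G) (hr : 0 ≤ r) (hK : 0 < K)
    {φ : ℝ → Fin d → ℝ} (hφ : ContinuousOn φ (Icc (-r) 0)) :
    ∃ x : ℝ → Fin d → ℝ, Continuous x ∧ (∀ θ ∈ Icc (-r) 0, x θ = φ θ) ∧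
      ∀ t > 0, HasDerivAt x (G (seg r x t)) t := by
  obtain ⟨C, hC⟩ := isCompact_Icc.exists_bound_of_continuousOn hφ
  have hφ' : ContinuousOn φ (Icc (0 - r) 0) := by rwa [zero_sub]
  let w : ℝ →ᵇ (Fin d → ℝ) := .ofNormedAddCommGroup (seg r φ 0) (continuous_seg hr hφ') C
    fun θ => hC _ (by simpa using add_clamp_mem_Icc hr 0 θ)
  obtain ⟨x, hxc, hxw, hxd⟩ := hG.exists_solution_of_boundedContinuousFunction hr hK w
  refine ⟨x, hxc, fun θ hθ => ?_, hxd⟩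
  rw [hxw θ hθ.2]
  exact (seg_apply_of_mem φ 0 hθ).trans (by rw [zero_add])

lemma eqOn_of_hasDerivAt (hG : SegLipschitzWith r K G) (hr : 0 ≤ r) (hK : 0 < K)
    {z₁ z₂ : ℝ → Fin d → ℝ} (hz₁ : ContinuousOn z₁ (Ici (-r))) (hz₂ : ContinuousOn z₂ (Ici (-r)))
    (h₀ : EqOn z₁ z₂ (Icc (-r) 0)) (hd₁ : ∀ t > 0, HasDerivAt z₁ (G (seg r z₁ t)) t)
    (hd₂ : ∀ t > 0, HasDerivAt z₂ (G (seg r z₂ t)) t) : EqOn z₁ z₂ (Ici (-r)) := by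
  set η := (2 * K)⁻¹
  have hη : 0 < η := by positivity
  suffices ∀ t, -r ≤ t → z₁ t = z₂ t from fun t ht => this t ht
  refine forall_of_forall_le_add hη (fun t ht hrt => h₀ ⟨hrt, ht⟩) fun a ha hagree => ?_
  have hsub : ∀ b, Icc a b ⊆ Ici (-r) := fun b t ht => by simp only [mem_Ici]; linarith [ht.1]
  obtain ⟨t₁, ht₁, hmax⟩ := isCompact_Icc.exists_isMaxOn (nonempty_Icc.2 (by linarith))
    ((hz₁.sub hz₂).norm.mono (hsub (a + η)))
  set H := ‖z₁ t₁ - z₂ t₁‖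
  have hdist : ∀ s ∈ Ioo a t₁, ∀ u ∈ Icc (s - r) s, ‖z₁ u - z₂ u‖ ≤ H := by
    intro s hs u hu
    rcases le_total u a with hua | hua
    · rw [hagree u hua (by linarith [hu.1, hs.1]), sub_self, norm_zero]
      exact norm_nonneg _
    · exact hmax ⟨hua, hu.2.trans (hs.2.le.trans ht₁.2)⟩
  have hH : H ≤ K * H * (t₁ - a) := by
    have hseg : ∀ s ∈ Ioo a t₁, Icc (s - r) s ⊆ Ici (-r) := fun s hs u hu => by
      simp only [mem_Ici]; linarith [hu.1, hs.1]
    have := norm_sub_le_of_norm_hasDerivAt_le (f := z₁ - z₂) ht₁.1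
      ((hz₁.sub hz₂).mono (hsub t₁))
      (fun s hs => (hd₁ s (ha.trans_lt hs.1)).sub (hd₂ s (ha.trans_lt hs.1)))
      fun s hs => hG _ _ s H (hz₁.mono (hseg s hs)) (hz₂.mono (hseg s hs)) (hdist s hs)
    rwa [Pi.sub_apply, Pi.sub_apply, hagree a le_rfl (by linarith), sub_self, sub_zero] at this
  have hH0 : H = 0 := by
    have : K * H * (t₁ - a) ≤ K * H * η :=
      mul_le_mul_of_nonneg_left (by linarith [ht₁.2]) (mul_nonneg hK.le (norm_nonneg _))
    have hKη : K * H * η = H / 2 := by simp only [η]; field_simp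
    linarith [norm_nonneg (z₁ t₁ - z₂ t₁)]
  intro t ht hrt
  rcases le_total t a with hta | hta
  · exact hagree t hta hrt
  · exact sub_eq_zero.1 (norm_le_zero_iff.1 ((hmax ⟨hta, ht⟩).trans hH0.le))

end SegLipschitzWith

section Retraction

variable {d : ℕ} {r : ℝ}

def BallLipschitzWith (r M K : ℝ) (F : (ℝ → Fin d → ℝ) → Fin d → ℝ) : Prop :=
  ∀ ψ₁ ψ₂ : ℝ → Fin d → ℝ, ContinuousOn ψ₁ (Icc (-r) 0) → ContinuousOn ψ₂ (Icc (-r) 0) →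
    (∀ θ ∈ Icc (-r) 0, ‖ψ₁ θ‖ ≤ M) → (∀ θ ∈ Icc (-r) 0, ‖ψ₂ θ‖ ≤ M) →
    ∀ C : ℝ, 0 ≤ C → (∀ θ ∈ Icc (-r) 0, ‖ψ₁ θ - ψ₂ θ‖ ≤ C) → ‖F ψ₁ - F ψ₂‖ ≤ K * C

variable [Nonempty (Fin d)] {F : (ℝ → Fin d → ℝ) → Fin d → ℝ}

lemma continuous_simplexProj_comp_seg (hr : 0 ≤ r) {z : ℝ → Fin d → ℝ} {s : ℝ}
    (hz : ContinuousOn z (Icc (s - r) s)) : Continuous (simplexProj ∘ seg r z s) :=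
  lipschitzWith_simplexProj.continuous.comp (continuous_seg hr hz)

lemma simplexProj_comp_seg (hr : 0 ≤ r) {z : ℝ → Fin d → ℝ} {s : ℝ}
    (hz : ∀ u ∈ Icc (s - r) s, z u ∈ stdSimplex ℝ (Fin d)) : simplexProj ∘ seg r z s = seg r z s :=
  funext fun θ => simplexProj_eq_self (hz _ (add_clamp_mem_Icc hr s θ))

lemma BallLipschitzWith.segLipschitzWith_comp_simplexProj {K : ℝ} (hF : BallLipschitzWith r 1 K F)
    (hr : 0 ≤ r) : SegLipschitzWith r (2 * K) fun ψ => F (simplexProj ∘ ψ) := by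
  intro z z' s C hz hz' hC
  have hball : ∀ v : Fin d → ℝ, ‖simplexProj v‖ ≤ 1 := fun v =>
    mem_closedBall_zero_iff.1 (stdSimplex_subset_closedBall (simplexProj_mem v))
  have hC0 : 0 ≤ C := (norm_nonneg _).trans (hC s ⟨by linarith, le_rfl⟩)
  calc _ ≤ K * (2 * C) := hF _ _ (continuous_simplexProj_comp_seg hr hz).continuousOn
        (continuous_simplexProj_comp_seg hr hz').continuousOn (fun θ _ => hball _)
        (fun θ _ => hball _) (2 * C) (by positivity) fun θ _ => ?_
    _ = 2 * K * C := by ring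
  calc ‖simplexProj (seg r z s θ) - simplexProj (seg r z' s θ)‖
      ≤ 2 * ‖seg r z s θ - seg r z' s θ‖ := by
        simpa only [dist_eq_norm, NNReal.coe_ofNat] using
          lipschitzWith_simplexProj.dist_le_mul (seg r z s θ) (seg r z' s θ)
    _ ≤ 2 * C := by gcongr; exact hC _ (add_clamp_mem_Icc hr s θ)

lemma mem_stdSimplex_of_hasDerivAt_comp_simplexProj (hr : 0 ≤ r)
    (hFpos : ∀ ψ : ℝ → Fin d → ℝ, ContinuousOn ψ (Icc (-r) 0) →
      (∀ θ ∈ Icc (-r) 0, ψ θ ∈ stdSimplex ℝ (Fin d)) → ∀ i, ψ 0 i = 0 → 0 ≤ F ψ i)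
    (hFsum : ∀ ψ : ℝ → Fin d → ℝ, ContinuousOn ψ (Icc (-r) 0) →
      (∀ θ ∈ Icc (-r) 0, ψ θ ∈ stdSimplex ℝ (Fin d)) → ∑ i, F ψ i = 0)
    {x : ℝ → Fin d → ℝ} (hx : Continuous x)
    (hd : ∀ t > 0, HasDerivAt x (F (simplexProj ∘ seg r x t)) t) (h0 : x 0 ∈ stdSimplex ℝ (Fin d)) :
    ∀ t ≥ 0, x t ∈ stdSimplex ℝ (Fin d) := by
  have hcont : ∀ t, ContinuousOn (simplexProj ∘ seg r x t) (Icc (-r) 0) := fun t =>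
    (continuous_simplexProj_comp_seg hr hx.continuousOn).continuousOn
  have hmem : ∀ t, ∀ θ ∈ Icc (-r) 0, (simplexProj ∘ seg r x t) θ ∈ stdSimplex ℝ (Fin d) :=
    fun _ _ _ => simplexProj_mem _
  refine mem_stdSimplex_of_hasDerivAt hx.continuousOn hd h0 (fun t _ => hFsum _ (hcont t) (hmem t))
    fun t _ hsum i hi => hFpos _ (hcont t) (hmem t) i ?_
  rw [Function.comp_apply, seg_apply_of_mem x t ⟨by linarith, le_rfl⟩, add_zero]
  exact simplexProj_apply_eq_zero hsum hi.le

end Retraction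

theorem stmt_0_general (d : ℕ) (r : ℝ) (hr : 0 < r)
    (F : (ℝ → Fin d → ℝ) → Fin d → ℝ)
    (hFlip : ∀ M : ℝ, 0 < M → ∃ K : ℝ, 0 < K ∧ ∀ ψ₁ ψ₂ : ℝ → Fin d → ℝ,
      ContinuousOn ψ₁ (Icc (-r) 0) → ContinuousOn ψ₂ (Icc (-r) 0) →
      (∀ θ ∈ Icc (-r) 0, ‖ψ₁ θ‖ ≤ M) → (∀ θ ∈ Icc (-r) 0, ‖ψ₂ θ‖ ≤ M) →
      ∀ C : ℝ, 0 ≤ C → (∀ θ ∈ Icc (-r) 0, ‖ψ₁ θ - ψ₂ θ‖ ≤ C) →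
        ‖F ψ₁ - F ψ₂‖ ≤ K * C)
    (hFpos : ∀ ψ : ℝ → Fin d → ℝ, ContinuousOn ψ (Icc (-r) 0) →
      (∀ θ ∈ Icc (-r) 0, ψ θ ∈ stdSimplex ℝ (Fin d)) →
      ∀ i, ψ 0 i = 0 → 0 ≤ F ψ i)
    (hFsum : ∀ ψ : ℝ → Fin d → ℝ, ContinuousOn ψ (Icc (-r) 0) →
      (∀ θ ∈ Icc (-r) 0, ψ θ ∈ stdSimplex ℝ (Fin d)) →
      ∑ i, F ψ i = 0)
    (φ : ℝ → Fin d → ℝ) (hφcont : ContinuousOn φ (Icc (-r) 0))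
    (hφsimplex : ∀ θ ∈ Icc (-r) 0, φ θ ∈ stdSimplex ℝ (Fin d)) :
    ∃ x : ℝ → Fin d → ℝ,
      (ContinuousOn x (Ici (-r)) ∧
        (∀ θ ∈ Icc (-r) 0, x θ = φ θ) ∧
        (∀ t : ℝ, 0 < t → HasDerivAt x (F (seg r x t)) t) ∧
        ∀ t : ℝ, 0 ≤ t → x t ∈ stdSimplex ℝ (Fin d)) ∧
      ∀ y : ℝ → Fin d → ℝ,
        (ContinuousOn y (Ici (-r)) ∧
          (∀ θ ∈ Icc (-r) 0, y θ = φ θ) ∧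
          (∀ t : ℝ, 0 < t → HasDerivAt y (F (seg r y t)) t) ∧
          ∀ t : ℝ, 0 ≤ t → y t ∈ stdSimplex ℝ (Fin d)) →
        ∀ t : ℝ, -r ≤ t → y t = x t := by
  have h0 : (0 : ℝ) ∈ Icc (-r) 0 := ⟨by linarith, le_rfl⟩
  have : Nonempty (Fin d) := not_isEmpty_iff.1 fun _ => by
    simpa [stdSimplex_of_isEmpty_index] using hφsimplex 0 h0
  obtain ⟨K, hK, hFK⟩ := hFlip 1 one_pos
  have hG := BallLipschitzWith.segLipschitzWith_comp_simplexProj hFK hr.le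
  have hretract : ∀ z t, (∀ u ≥ -r, z u ∈ stdSimplex ℝ (Fin d)) → 0 ≤ t →
      F (simplexProj ∘ seg r z t) = F (seg r z t) := fun z t hz ht =>
    congrArg F (simplexProj_comp_seg hr.le fun u hu => hz u (by linarith [hu.1]))
  have hsimplex : ∀ z : ℝ → Fin d → ℝ, (∀ θ ∈ Icc (-r) 0, z θ = φ θ) →
      (∀ t ≥ 0, z t ∈ stdSimplex ℝ (Fin d)) → ∀ t ≥ -r, z t ∈ stdSimplex ℝ (Fin d) :=
    fun z hzφ hz t ht => (le_total t 0).elim (fun h => hzφ t ⟨ht, h⟩ ▸ hφsimplex t ⟨ht, h⟩) (hz t)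
  obtain ⟨x, hxc, hxφ, hxd⟩ := hG.exists_solution hr.le (by positivity) hφcont
  have hxΔ := hsimplex x hxφ <| mem_stdSimplex_of_hasDerivAt_comp_simplexProj hr.le hFpos hFsum
    hxc hxd (hxφ 0 h0 ▸ hφsimplex 0 h0)
  refine ⟨x, ⟨hxc.continuousOn, hxφ, fun t ht => hretract x t hxΔ ht.le ▸ hxd t ht,
    fun t ht => hxΔ t (by linarith)⟩, ?_⟩
  rintro y ⟨hyc, hyφ, hyd, hyΔ⟩ t ht
  refine hG.eqOn_of_hasDerivAt hr.le (by positivity) hyc hxc.continuousOn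
    (fun θ hθ => (hyφ θ hθ).trans (hxφ θ hθ).symm) (fun s hs => ?_) hxd ht
  exact (hretract y s (hsimplex y hyφ hyΔ) hs.le).symm ▸ hyd s hs

/-- Global existence, uniqueness and forward invariance of the simplex for
the mean-field delay differential equation `x'(t) = F(x_t)`: if `F` is continuous and
locally Lipschitz on `C = C([-r,0], ℝ^d)` (with respect to the sup norm built from the max
norm on `ℝ^d`), is quasi-positive on simplex-valued segments (`Fᵢ(ψ) ≥ 0` when `ψ(0)ᵢ = 0`)
and has zero sum there, then for every simplex-valued continuous initial function `φ` there
is a unique continuous solution on `[−r,∞)` with initial segment `φ`, satisfying the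
equation for `t > 0` and staying in the simplex for `t ≥ 0`. -/
theorem stmt_0 (d : ℕ) (hd : 2 ≤ d) (r : ℝ) (hr : 0 < r)
    (F : (ℝ → Fin d → ℝ) → Fin d → ℝ)
    (hFcont : ∀ ψ : ℝ → Fin d → ℝ, ContinuousOn ψ (Icc (-r) 0) →
      ∀ ε : ℝ, 0 < ε → ∃ δ : ℝ, 0 < δ ∧ ∀ ψ' : ℝ → Fin d → ℝ,
        ContinuousOn ψ' (Icc (-r) 0) →
        (∀ θ ∈ Icc (-r) 0, ‖ψ θ - ψ' θ‖ ≤ δ) → ‖F ψ - F ψ'‖ < ε)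
    (hFlip : ∀ M : ℝ, 0 < M → ∃ K : ℝ, 0 < K ∧ ∀ ψ₁ ψ₂ : ℝ → Fin d → ℝ,
      ContinuousOn ψ₁ (Icc (-r) 0) → ContinuousOn ψ₂ (Icc (-r) 0) →
      (∀ θ ∈ Icc (-r) 0, ‖ψ₁ θ‖ ≤ M) → (∀ θ ∈ Icc (-r) 0, ‖ψ₂ θ‖ ≤ M) →
      ∀ C : ℝ, 0 ≤ C → (∀ θ ∈ Icc (-r) 0, ‖ψ₁ θ - ψ₂ θ‖ ≤ C) →
        ‖F ψ₁ - F ψ₂‖ ≤ K * C)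
    (hFpos : ∀ ψ : ℝ → Fin d → ℝ, ContinuousOn ψ (Icc (-r) 0) →
      (∀ θ ∈ Icc (-r) 0, ψ θ ∈ stdSimplex ℝ (Fin d)) →
      ∀ i, ψ 0 i = 0 → 0 ≤ F ψ i)
    (hFsum : ∀ ψ : ℝ → Fin d → ℝ, ContinuousOn ψ (Icc (-r) 0) →
      (∀ θ ∈ Icc (-r) 0, ψ θ ∈ stdSimplex ℝ (Fin d)) →
      ∑ i, F ψ i = 0)
    (φ : ℝ → Fin d → ℝ) (hφcont : ContinuousOn φ (Icc (-r) 0))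
    (hφsimplex : ∀ θ ∈ Icc (-r) 0, φ θ ∈ stdSimplex ℝ (Fin d)) :
    ∃ x : ℝ → Fin d → ℝ,
      (ContinuousOn x (Ici (-r)) ∧
        (∀ θ ∈ Icc (-r) 0, x θ = φ θ) ∧
        (∀ t : ℝ, 0 < t → HasDerivAt x (F (seg r x t)) t) ∧
        ∀ t : ℝ, 0 ≤ t → x t ∈ stdSimplex ℝ (Fin d)) ∧
      ∀ y : ℝ → Fin d → ℝ,
        (ContinuousOn y (Ici (-r)) ∧
          (∀ θ ∈ Icc (-r) 0, y θ = φ θ) ∧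
          (∀ t : ℝ, 0 < t → HasDerivAt y (F (seg r y t)) t) ∧
          ∀ t : ℝ, 0 ≤ t → y t ∈ stdSimplex ℝ (Fin d)) →
        ∀ t : ℝ, -r ≤ t → y t = x t :=
  stmt_0_general d r hr F hFlip hFpos hFsum φ hφcont hφsimplex
end

section
/- Let d ≥ 1, r ≥ 0 and K, δ, T > 0. Let F be a map from the space of bounded functions ψ : [−r,0] → ℝ^d (equipped with the norm sup_{θ∈[−r,0]} ‖ψ(θ)‖) to ℝ^d satisfying ‖F(ψ₁) − F(ψ₂)‖ ≤ K·sup_{θ∈[−r,0]} ‖ψ₁(θ) − ψ₂(θ)‖ for all ψ₁, ψ₂. Let x : [−r,T] → ℝ^d be continuous with x(t) = x(0) + ∫₀^t F(x_s) ds for all t ∈ [0,T]. Let Y : [−r,T] → ℝ^d be continuous, X̄ : [−r,T] → ℝ^d bounded measurable, and U : [0,T] → ℝ^d integrable, with Y(t) = Y(0) + ∫₀^t [F(X̄_s) + U(s)] ds for all t ∈ [0,T], and suppose sup_{s∈[0,T]} sup_{θ∈[−r,0]} ‖X̄(s+θ) − Y(s+θ)‖ ≤ 2δ. Set v₀ =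 sup_{μ∈[−r,0]} ‖Y(μ) − x(μ)‖ and ψ* = max_{t∈[0,T]} ‖∫₀^t U(s) ds‖. Then max_{t∈[0,T]} ‖Y(t) − x(t)‖ ≤ (v₀ + ψ* + 2KδT)·e^{KT}. -/
open Set MeasureTheory intervalIntegral

/-!
Let `φ(t) = sup_{[-r,t]} ‖Y - x‖`. Since `‖X̄(s+θ) - x(s+θ)‖ ≤ 2δ + φ(s)` on the delay window,
the Lipschitz bound gives `‖F(X̄_s) - F(x_s)‖ ≤ 2Kδ + Kφ(s)`, and subtracting the two integral
equations yields `φ(t) ≤ a + K ∫₀ᵗ φ` with `a = v₀ + ψ* + 2KδT`. As `φ` is monotone, the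
difference quotients of `ψ = ∫₀ᵗ φ` from the right are at most `φ(z) ≤ a + Kψ(z)`, so the
differential form of Grönwall's inequality applies to `ψ` and gives `φ(t) ≤ a e^{Kt}`.
-/

open Filter Topology

theorem add_mul_gronwallBound_zero (C K x : ℝ) :
    C + K * gronwallBound 0 K C x = C * Real.exp (K * x) := by
  rcases eq_or_ne K 0 with rfl | hK
  · simp [gronwallBound_K0]
  · rw [gronwallBound_of_K_ne_0 hK]
    field_simp
    ring

theorem MonotoneOn.integral_le_sub_mul_right {φ : ℝ → ℝ} {x z : ℝ}
    (hφ : MonotoneOn φ (Icc x z)) (hxz : x ≤ z) :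
    ∫ s in x..z, φ s ≤ (z - x) * φ z := by
  have hint : IntervalIntegrable φ volume x z := (uIcc_of_le hxz ▸ hφ).intervalIntegrable
  simpa [mul_comm] using integral_mono_on hxz hint intervalIntegrable_const
    fun s hs => hφ hs (right_mem_Icc.2 hxz) hs.2

theorem MonotoneOn.le_mul_exp_of_le_add_integral {φ : ℝ → ℝ} {a b C K : ℝ}
    (hφ : MonotoneOn φ (Icc a b)) (hK : 0 ≤ K)
    (h : ∀ t ∈ Icc a b, φ t ≤ C + K * ∫ s in a..t, φ s) :
    ∀ t ∈ Icc a b, φ t ≤ C * Real.exp (K * (t - a)) := by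
  intro t ht
  have hab : a ≤ b := ht.1.trans ht.2
  set ψ : ℝ → ℝ := fun t => ∫ s in a..t, φ s
  have hint : ∀ u ∈ Icc a b, ∀ v ∈ Icc a b, IntervalIntegrable φ volume u v :=
    fun u hu v hv => (hφ.mono (uIcc_subset_Icc hu hv)).intervalIntegrable
  have ha : a ∈ Icc a b := left_mem_Icc.2 hab
  have hψ : ContinuousOn ψ (Icc a b) := by
    simpa [uIcc_of_le hab] using
      continuousOn_primitive_interval' (hint a ha b (right_mem_Icc.2 hab)) left_mem_uIcc
  have hslope : ∀ x ∈ Ico a b, ∀ ρ, C + K * ψ x < ρ →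
      ∃ᶠ z in 𝓝[>] x, (z - x)⁻¹ * (ψ z - ψ x) < ρ := by
    intro x hx ρ hρ
    have hx' : x ∈ Icc a b := Ico_subset_Icc_self hx
    have hright : ContinuousWithinAt ψ (Ioi x) x :=
      (hψ x hx').mono_of_mem_nhdsWithin <| mem_of_superset (Ioo_mem_nhdsGT hx.2)
        (Ioo_subset_Icc_self.trans (Icc_subset_Icc_left hx.1))
    have hlim : ∀ᶠ z in 𝓝[>] x, C + K * ψ z < ρ :=
      (continuousWithinAt_const.add (continuousWithinAt_const.mul hright)).eventually_lt
        continuousWithinAt_const hρ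
    refine Eventually.frequently ?_
    filter_upwards [hlim, Ioo_mem_nhdsGT hx.2] with z hz hzI
    have hz' : z ∈ Icc a b := ⟨hx.1.trans hzI.1.le, hzI.2.le⟩
    have hquot : ψ z - ψ x ≤ (z - x) * φ z := by
      rw [integral_interval_sub_left (hint a ha z hz') (hint a ha x hx')]
      exact (hφ.mono (Icc_subset_Icc hx.1 hzI.2.le)).integral_le_sub_mul_right hzI.1.le
    calc (z - x)⁻¹ * (ψ z - ψ x) ≤ φ z := by rwa [inv_mul_le_iff₀ (sub_pos.2 hzI.1)]
      _ ≤ C + K * ψ z := h z hz'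
      _ < ρ := hz
  have hgron := le_gronwallBound_of_liminf_deriv_right_le hψ hslope (by simp [ψ] : ψ a ≤ 0)
    (fun x _ => (add_comm _ _).le) t ht
  calc φ t ≤ C + K * ψ t := h t ht
    _ ≤ C + K * gronwallBound 0 K C (t - a) := by gcongr
    _ = C * Real.exp (K * (t - a)) := add_mul_gronwallBound_zero C K _

noncomputable def runningSup (g : ℝ → ℝ) (a s : ℝ) : ℝ := sSup (g '' Icc a s)

section runningSup

variable {g : ℝ → ℝ} {a b s u C : ℝ}

theorem le_runningSup (hg : ContinuousOn g (Icc a b)) (hs : s ≤ b) (hu : u ∈ Icc a s) :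
    g u ≤ runningSup g a s :=
  le_csSup (isCompact_Icc.bddAbove_image (hg.mono (Icc_subset_Icc le_rfl hs)))
    (mem_image_of_mem g hu)

theorem runningSup_le (has : a ≤ s) (h : ∀ u ∈ Icc a s, g u ≤ C) : runningSup g a s ≤ C :=
  csSup_le ((nonempty_Icc.2 has).image g) (forall_mem_image.2 h)

theorem monotoneOn_runningSup (hg : ContinuousOn g (Icc a b)) :
    MonotoneOn (runningSup g a) (Icc a b) := fun _ hs _ ht hst =>
  runningSup_le hs.1 fun _ hu => le_runningSup hg ht.2 ⟨hu.1, hu.2.trans hst⟩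

theorem intervalIntegrable_runningSup (hg : ContinuousOn g (Icc a b)) (hs : s ∈ Icc a b)
    (hu : u ∈ Icc a b) : IntervalIntegrable (runningSup g a) volume s u :=
  ((monotoneOn_runningSup hg).mono (uIcc_subset_Icc hs hu)).intervalIntegrable

theorem le_mul_exp_of_le_add_integral_runningSup {K : ℝ} (hg : ContinuousOn g (Icc a b))
    (hg0 : ∀ u ∈ Icc a b, 0 ≤ g u) (ha : a ≤ 0) (hK : 0 ≤ K) (hinit : ∀ u ∈ Icc a 0, g u ≤ C)
    (hbound : ∀ u ∈ Icc 0 b, g u ≤ C + K * ∫ s in 0..u, runningSup g a s) :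
    ∀ t ∈ Icc 0 b, g t ≤ C * Real.exp (K * t) := by
  set φ := runningSup g a
  have hmono : MonotoneOn φ (Icc 0 b) := (monotoneOn_runningSup hg).mono (Icc_subset_Icc_left ha)
  have hφ0 : ∀ s ∈ Icc 0 b, 0 ≤ φ s := fun s hs =>
    (hg0 s ⟨ha.trans hs.1, hs.2⟩).trans (le_runningSup hg hs.2 ⟨ha.trans hs.1, le_rfl⟩)
  have hint : ∀ u ∈ Icc 0 b, ∀ v ∈ Icc 0 b, IntervalIntegrable φ volume u v := fun u hu v hv =>
    intervalIntegrable_runningSup hg ⟨ha.trans hu.1, hu.2⟩ ⟨ha.trans hv.1, hv.2⟩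
  have hφ : ∀ t ∈ Icc 0 b, φ t ≤ C + K * ∫ s in 0..t, φ s := by
    intro t ht
    have hint_nonneg : ∀ u ∈ Icc 0 t, 0 ≤ ∫ s in u..t, φ s := fun u hu =>
      integral_nonneg hu.2 fun s hs => hφ0 s ⟨hu.1.trans hs.1, hs.2.trans ht.2⟩
    refine runningSup_le (ha.trans ht.1) fun u hu => ?_
    rcases le_or_gt u 0 with hu0 | hu0
    · nlinarith [hinit u ⟨hu.1, hu0⟩, hint_nonneg 0 ⟨le_rfl, ht.1⟩]
    · have hu' : u ∈ Icc 0 b := ⟨hu0.le, hu.2.trans ht.2⟩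
      have hsplit := integral_add_adjacent_intervals
        (hint 0 (left_mem_Icc.2 (ht.1.trans ht.2)) u hu') (hint u hu' t ht)
      calc g u ≤ C + K * ∫ s in 0..u, φ s := hbound u hu'
        _ ≤ C + K * ∫ s in 0..t, φ s := by
          gcongr
          linarith [hint_nonneg u ⟨hu0.le, hu.2⟩]
  intro t ht
  calc g t ≤ φ t := le_runningSup hg ht.2 ⟨ha.trans ht.1, le_rfl⟩
    _ ≤ C * Real.exp (K * (t - 0)) := hmono.le_mul_exp_of_le_add_integral hK hφ t ht
    _ = C * Real.exp (K * t) := by rw [sub_zero]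

end runningSup

theorem seg_of_mem {d : ℕ} {r s θ : ℝ} (z : ℝ → Fin d → ℝ) (hθ : θ ∈ Icc (-r) 0) :
    seg r z s θ = z (s + θ) := by
  rw [seg, min_eq_left hθ.2, max_eq_left hθ.1]

theorem norm_seg_le {d : ℕ} {r s B : ℝ} {z : ℝ → Fin d → ℝ} (hr : 0 ≤ r)
    (hz : ∀ u ∈ Icc (s - r) s, ‖z u‖ ≤ B) (θ : ℝ) : ‖seg r z s θ‖ ≤ B :=
  hz _ ⟨by linarith [le_max_right (min θ 0) (-r)],
    by linarith [max_le (min_le_right θ 0) (neg_nonpos.2 hr)]⟩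

def DelayLipschitzWith {d : ℕ} (r K : ℝ) (F : (ℝ → Fin d → ℝ) → Fin d → ℝ) : Prop :=
  ∀ ψ₁ ψ₂ : ℝ → Fin d → ℝ,
    (∃ B : ℝ, ∀ θ, ‖ψ₁ θ‖ ≤ B) → (∃ B : ℝ, ∀ θ, ‖ψ₂ θ‖ ≤ B) →
    ∀ C : ℝ, 0 ≤ C → (∀ θ ∈ Icc (-r) 0, ‖ψ₁ θ - ψ₂ θ‖ ≤ C) → ‖F ψ₁ - F ψ₂‖ ≤ K * C

theorem DelayLipschitzWith.norm_sub_le {d : ℕ} {r K : ℝ} {F : (ℝ → Fin d → ℝ) → Fin d → ℝ}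
    (hF : DelayLipschitzWith r K F) (hr : 0 ≤ r) {z w : ℝ → Fin d → ℝ} {s Bz Bw C : ℝ}
    (hz : ∀ u ∈ Icc (s - r) s, ‖z u‖ ≤ Bz) (hw : ∀ u ∈ Icc (s - r) s, ‖w u‖ ≤ Bw)
    (h : ∀ θ ∈ Icc (-r) 0, ‖z (s + θ) - w (s + θ)‖ ≤ C) :
    ‖F (seg r z s) - F (seg r w s)‖ ≤ K * C := by
  refine hF _ _ ⟨Bz, norm_seg_le hr hz⟩ ⟨Bw, norm_seg_le hr hw⟩ C
    ((norm_nonneg _).trans (h 0 ⟨neg_nonpos.2 hr, le_rfl⟩)) fun θ hθ => ?_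
  rw [seg_of_mem z hθ, seg_of_mem w hθ]
  exact h θ hθ

theorem norm_sub_le_of_eq_integral {E : Type*} [NormedAddCommGroup E] [NormedSpace ℝ E]
    {x y f g U : ℝ → E} {β : ℝ → ℝ} {u : ℝ} (hu : 0 ≤ u)
    (hf : IntervalIntegrable f volume 0 u)
    (hgU : IntervalIntegrable (fun s => g s + U s) volume 0 u)
    (hU : IntervalIntegrable U volume 0 u) (hβ : IntervalIntegrable β volume 0 u)
    (hx : x u = x 0 + ∫ s in 0..u, f s) (hy : y u = y 0 + ∫ s in 0..u, (g s + U s))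
    (hgf : ∀ s ∈ Icc 0 u, ‖g s - f s‖ ≤ β s) :
    ‖y u - x u‖ ≤ ‖y 0 - x 0‖ + (∫ s in 0..u, β s) + ‖∫ s in 0..u, U s‖ := by
  have hg : IntervalIntegrable g volume 0 u := by simpa using hgU.sub hU
  have hdecomp : y u - x u = (y 0 - x 0) + (∫ s in 0..u, (g s - f s)) + ∫ s in 0..u, U s := by
    rw [hx, hy, integral_add hg hU, integral_sub hg hf]
    abel
  rw [hdecomp]
  refine norm_add₃_le.trans ?_
  gcongr
  exact (intervalIntegral.norm_integral_le_integral_norm hu).trans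
    (integral_mono_on hu (hg.sub hf).norm hβ hgf)

theorem stmt_3_general (d : ℕ) (r K δ T : ℝ)
    (hr : 0 ≤ r) (hK : 0 < K) (hδ : 0 < δ) (hT : 0 < T)
    (F : (ℝ → Fin d → ℝ) → Fin d → ℝ)
    (hFlip : ∀ ψ₁ ψ₂ : ℝ → Fin d → ℝ,
      (∃ B : ℝ, ∀ θ, ‖ψ₁ θ‖ ≤ B) → (∃ B : ℝ, ∀ θ, ‖ψ₂ θ‖ ≤ B) →
      ∀ C : ℝ, 0 ≤ C → (∀ θ ∈ Icc (-r) 0, ‖ψ₁ θ - ψ₂ θ‖ ≤ C) →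
        ‖F ψ₁ - F ψ₂‖ ≤ K * C)
    (x : ℝ → Fin d → ℝ) (hxcont : ContinuousOn x (Icc (-r) T))
    (hxint : IntervalIntegrable (fun s => F (seg r x s)) volume 0 T)
    (hxeq : ∀ t ∈ Icc (0:ℝ) T, x t = x 0 + ∫ s in (0:ℝ)..t, F (seg r x s))
    (Y : ℝ → Fin d → ℝ) (hYcont : ContinuousOn Y (Icc (-r) T))
    (Xbar : ℝ → Fin d → ℝ)
    (hXbarbdd : ∃ B : ℝ, ∀ t, ‖Xbar t‖ ≤ B)
    (U : ℝ → Fin d → ℝ) (hUint : IntervalIntegrable U volume 0 T)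
    (hYint : IntervalIntegrable (fun s => F (seg r Xbar s) + U s) volume 0 T)
    (hYeq : ∀ t ∈ Icc (0:ℝ) T, Y t = Y 0 + ∫ s in (0:ℝ)..t, (F (seg r Xbar s) + U s))
    (hclose : ∀ s ∈ Icc (0:ℝ) T, ∀ θ ∈ Icc (-r) 0, ‖Xbar (s + θ) - Y (s + θ)‖ ≤ 2 * δ)
    (v₀ ψstar : ℝ)
    (hv₀ : ∀ μ' ∈ Icc (-r) 0, ‖Y μ' - x μ'‖ ≤ v₀)
    (hψstar : ∀ t ∈ Icc (0:ℝ) T, ‖∫ s in (0:ℝ)..t, U s‖ ≤ ψstar) :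
    ∀ t ∈ Icc (0:ℝ) T, ‖Y t - x t‖ ≤ (v₀ + ψstar + 2 * K * δ * T) * Real.exp (K * T) := by
  have hr0 : -r ≤ 0 := neg_nonpos.2 hr
  set g : ℝ → ℝ := fun u => ‖Y u - x u‖
  set φ := runningSup g (-r)
  have hg : ContinuousOn g (Icc (-r) T) := (hYcont.sub hxcont).norm
  obtain ⟨Bx, hBx⟩ := isCompact_Icc.exists_bound_of_continuousOn hxcont
  obtain ⟨BX, hBX⟩ := hXbarbdd
  have hdrift : ∀ s ∈ Icc 0 T,
      ‖F (seg r Xbar s) - F (seg r x s)‖ ≤ K * (2 * δ + φ s) := fun s hs =>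
    DelayLipschitzWith.norm_sub_le hFlip hr (fun u _ => hBX u)
      (fun u hu => hBx u ⟨by linarith [hu.1, hs.1], hu.2.trans hs.2⟩) fun θ hθ =>
        (norm_sub_le_norm_sub_add_norm_sub _ (Y (s + θ)) _).trans <| add_le_add (hclose s hs θ hθ)
          (le_runningSup hg hs.2 ⟨by linarith [hs.1, hθ.1], by linarith [hθ.2]⟩)
  have hψ0 : 0 ≤ ψstar := by simpa using hψstar 0 ⟨le_rfl, hT.le⟩
  have hv0 : 0 ≤ v₀ := (norm_nonneg _).trans (hv₀ 0 ⟨hr0, le_rfl⟩)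
  refine fun t ht => (le_mul_exp_of_le_add_integral_runningSup (C := v₀ + ψstar + 2 * K * δ * T)
    hg (fun u _ => norm_nonneg _) hr0 hK.le (fun u hu => ?_) (fun u hu => ?_) t ht).trans ?_
  · linarith [hv₀ u hu, show 0 ≤ 2 * K * δ * T by positivity]
  · have hsub : uIcc 0 u ⊆ uIcc 0 T := uIcc_subset_uIcc left_mem_uIcc (mem_uIcc_of_le hu.1 hu.2)
    have hφint : IntervalIntegrable φ volume 0 u :=
      intervalIntegrable_runningSup hg ⟨hr0, hT.le⟩ ⟨hr0.trans hu.1, hu.2⟩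
    have hdev := norm_sub_le_of_eq_integral hu.1 (hxint.mono_set hsub) (hYint.mono_set hsub)
      (hUint.mono_set hsub) ((intervalIntegrable_const.add hφint).const_mul K) (hxeq u hu)
      (hYeq u hu) fun s hs => hdrift s ⟨hs.1, hs.2.trans hu.2⟩
    rw [intervalIntegral.integral_const_mul, integral_add intervalIntegrable_const hφint,
      intervalIntegral.integral_const, smul_eq_mul, sub_zero] at hdev
    have hu2δ : K * (u * (2 * δ)) ≤ 2 * K * δ * T := by
      nlinarith [mul_nonneg (mul_nonneg hK.le hδ.le) (sub_nonneg.2 hu.2)]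
    refine hdev.trans ?_
    linarith [hv₀ 0 ⟨hr0, le_rfl⟩, hψstar u hu]
  · gcongr
    exact ht.2

/-- Deterministic Grönwall estimate: if `x` solves the integral equation
`x(t) = x(0) + ∫₀^t F(x_s) ds` with `F` K-Lipschitz in the sup norm over `[−r,0]`, and
`Y(t) = Y(0) + ∫₀^t [F(X̄_s) + U(s)] ds` with the step path `X̄` within `2δ` of `Y`
(uniformly along segments), then with `v₀` bounding the initial deviation `‖Y − x‖` on
`[−r,0]` and `ψ*` bounding `‖∫₀^t U‖` on `[0,T]`,
`max_{t∈[0,T]} ‖Y(t) − x(t)‖ ≤ (v₀ + ψ* + 2KδT) e^{KT}`. -/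
theorem stmt_3 (d : ℕ) (hd : 1 ≤ d) (r K δ T : ℝ)
    (hr : 0 ≤ r) (hK : 0 < K) (hδ : 0 < δ) (hT : 0 < T)
    (F : (ℝ → Fin d → ℝ) → Fin d → ℝ)
    (hFlip : ∀ ψ₁ ψ₂ : ℝ → Fin d → ℝ,
      (∃ B : ℝ, ∀ θ, ‖ψ₁ θ‖ ≤ B) → (∃ B : ℝ, ∀ θ, ‖ψ₂ θ‖ ≤ B) →
      ∀ C : ℝ, 0 ≤ C → (∀ θ ∈ Icc (-r) 0, ‖ψ₁ θ - ψ₂ θ‖ ≤ C) →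
        ‖F ψ₁ - F ψ₂‖ ≤ K * C)
    (x : ℝ → Fin d → ℝ) (hxcont : ContinuousOn x (Icc (-r) T))
    (hxint : IntervalIntegrable (fun s => F (seg r x s)) volume 0 T)
    (hxeq : ∀ t ∈ Icc (0:ℝ) T, x t = x 0 + ∫ s in (0:ℝ)..t, F (seg r x s))
    (Y : ℝ → Fin d → ℝ) (hYcont : ContinuousOn Y (Icc (-r) T))
    (Xbar : ℝ → Fin d → ℝ) (hXbarmeas : Measurable Xbar)
    (hXbarbdd : ∃ B : ℝ, ∀ t, ‖Xbar t‖ ≤ B)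
    (U : ℝ → Fin d → ℝ) (hUint : IntervalIntegrable U volume 0 T)
    (hYint : IntervalIntegrable (fun s => F (seg r Xbar s) + U s) volume 0 T)
    (hYeq : ∀ t ∈ Icc (0:ℝ) T, Y t = Y 0 + ∫ s in (0:ℝ)..t, (F (seg r Xbar s) + U s))
    (hclose : ∀ s ∈ Icc (0:ℝ) T, ∀ θ ∈ Icc (-r) 0, ‖Xbar (s + θ) - Y (s + θ)‖ ≤ 2 * δ)
    (v₀ ψstar : ℝ)
    (hv₀ : ∀ μ' ∈ Icc (-r) 0, ‖Y μ' - x μ'‖ ≤ v₀)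
    (hψstar : ∀ t ∈ Icc (0:ℝ) T, ‖∫ s in (0:ℝ)..t, U s‖ ≤ ψstar) :
    ∀ t ∈ Icc (0:ℝ) T, ‖Y t - x t‖ ≤ (v₀ + ψstar + 2 * K * δ * T) * Real.exp (K * T) :=
  stmt_3_general d r K δ T hr hK hδ hT F hFlip x hxcont hxint hxeq Y hYcont Xbar hXbarbdd U hUint
    hYint hYeq hclose v₀ ψstar hv₀ hψstar
end

section
/- Let (Ω, 𝓕, P) be a probability space, α > 0, C₀ > 0, and for each N ∈ ℕ let T_N : Ω → [0, ∞] be a random variable such that P[T_N ≤ t] ≤ C₀(t+1)e^{−αN} for every real t ≥ 0 and every N. Then P[ liminf_{N→∞} T_N = +∞ ] = 1. -/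
/-!
For each level `k`, the tail bound `P[T_N ≤ k] ≤ C₀ (k + 1) e^{-αN}` is summable in `N`, so by
Borel–Cantelli almost surely `T_N > k` for all large `N`. Intersecting these countably many
full-measure events over `k ∈ ℕ` gives `T_N → ∞`, hence `liminf T_N = ∞`, almost surely.
-/

open MeasureTheory Filter
open scoped ENNReal

theorem ENNReal.tsum_ofReal_mul_exp_neg_mul_ne_top {α : ℝ} (hα : 0 < α) (c : ℝ) :
    ∑' N : ℕ, ENNReal.ofReal (c * Real.exp (-(α * N))) ≠ ∞ := by
  have h_geom (N : ℕ) : ENNReal.ofReal (c * Real.exp (-(α * N))) =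
      ENNReal.ofReal c * ENNReal.ofReal (Real.exp (-α)) ^ N := by
    rw [ENNReal.ofReal_mul' (Real.exp_nonneg _), ← ENNReal.ofReal_pow (Real.exp_nonneg _),
      ← Real.exp_nat_mul, mul_neg, mul_comm α]
  have h_ratio : ENNReal.ofReal (Real.exp (-α)) < 1 := by
    simpa using Real.exp_lt_one_iff.mpr (neg_lt_zero.mpr hα)
  simp_rw [h_geom, ENNReal.tsum_mul_left]
  exact ENNReal.mul_ne_top ENNReal.ofReal_ne_top (tsum_geometric_lt_top.mpr h_ratio).ne

theorem MeasureTheory.ae_liminf_eq_top_of_tsum_measure_le_ne_top {Ω : Type*} [MeasurableSpace Ω]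
    {μ : Measure Ω} {T : ℕ → Ω → ℝ≥0∞} (h : ∀ k : ℕ, ∑' N, μ {ω | T N ω ≤ k} ≠ ∞) :
    ∀ᵐ ω ∂μ, liminf (fun N => T N ω) atTop = ∞ := by
  filter_upwards [ae_all_iff.mpr fun k => ae_eventually_notMem (h k)] with ω hω
  refine (ENNReal.tendsto_nhds_top fun k => ?_).liminf_eq
  filter_upwards [hω k] with N hN
  simpa using hN

theorem MeasureTheory.measure_eq_one_of_ae {Ω : Type*} [MeasurableSpace Ω] {μ : Measure Ω}
    [IsProbabilityMeasure μ] {p : Ω → Prop} (h : ∀ᵐ ω ∂μ, p ω) : μ {ω | p ω} = 1 :=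
  (measure_congr (ae_eq_univ.mpr (ae_iff.mp h))).trans measure_univ

theorem stmt_7_general (Ω : Type) [mΩ : MeasurableSpace Ω] (μ : Measure Ω) [IsProbabilityMeasure μ]
    (α C₀ : ℝ) (hα : 0 < α)
    (T : ℕ → Ω → ℝ≥0∞)
    (htail : ∀ (N : ℕ) (t : ℝ), 0 ≤ t →
      μ {ω | T N ω ≤ ENNReal.ofReal t} ≤
        ENNReal.ofReal (C₀ * (t + 1) * Real.exp (-(α * N)))) :
    μ {ω | Filter.liminf (fun N => T N ω) Filter.atTop = ⊤} = 1 := by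
  refine measure_eq_one_of_ae (ae_liminf_eq_top_of_tsum_measure_le_ne_top fun k => ?_)
  refine ne_top_of_le_ne_top (ENNReal.tsum_ofReal_mul_exp_neg_mul_ne_top hα (C₀ * (k + 1))) ?_
  refine ENNReal.tsum_le_tsum fun N => ?_
  simpa using htail N k k.cast_nonneg

/-- Borel–Cantelli for absorption times: if random variables `T_N` satisfy
`P[T_N ≤ t] ≤ C₀(t+1)e^{−αN}` for all real `t ≥ 0` and all `N`, then almost surely
`liminf_{N→∞} T_N = +∞`. -/
theorem stmt_7 (Ω : Type) [mΩ : MeasurableSpace Ω] (μ : Measure Ω) [IsProbabilityMeasure μ]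
    (α C₀ : ℝ) (hα : 0 < α) (hC₀ : 0 < C₀)
    (T : ℕ → Ω → ℝ≥0∞) (hTmeas : ∀ N, Measurable (T N))
    (htail : ∀ (N : ℕ) (t : ℝ), 0 ≤ t →
      μ {ω | T N ω ≤ ENNReal.ofReal t} ≤
        ENNReal.ofReal (C₀ * (t + 1) * Real.exp (-(α * N)))) :
    μ {ω | Filter.liminf (fun N => T N ω) Filter.atTop = ⊤} = 1 :=
  stmt_7_general Ω (mΩ := mΩ) μ α C₀ hα T htail
end

section
/- Let d ≥ 2, let A be a real d×d matrix, r ≥ 0, and let x : [−r,∞) → ℝ^d be continuous, differentiable on (0,∞), with x(t) ∈ Δ_d for all t ≥ −r, satisfying the discrete-delay replicator equation x_i′(t) = x_i(t)·[(A x(t−r))_i − ⟨x(t), A x(t−r)⟩] for all t > 0 and all i ∈ {1,…,d}. Assume there exists ε > 0 such that x_i(t) ≥ ε for all t ≥ 0 and all i, and assume p ∈ Δ_d satisfies p_i > 0 for all i and (Ap)_1 = (Ap)_2 = ⋯ = (Ap)_d, and that p is the unique such point of Δ_d. Then for every i, lim_{T→∞} (1/T)∫₀^T x_i(t) dt = p_i.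 -/
/-!
Along an interior solution, `log (xᵢ / xⱼ)` has derivative `(A x(t - r))ᵢ - (A x(t - r))ⱼ` and
stays bounded, so the time averages of these payoff differences tend to `0`. Shifting time by `r`
changes a time average only by `O(r / T)`, and averaging commutes with `A`; hence the time averages
`z(T)` of `x` satisfy `(A z(T))ᵢ - (A z(T))ⱼ → 0`. The `z(T)` stay in the compact set of points of
the simplex with all coordinates `≥ ε`, so each of their cluster points is an interior rest point,
that is, `p`.
-/

open Filter Set Topology MeasureTheory

lemma MapClusterPt.eq_of_tendsto_comp {α X Y : Type*} [TopologicalSpace X] [TopologicalSpace Y]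
    [T2Space Y] {l : Filter α} {z : α → X} {y : X} {g : X → Y} {c : Y}
    (hy : MapClusterPt y l z) (hg : ContinuousAt g y) (hgz : Tendsto (g ∘ z) l (𝓝 c)) :
    g y = c :=
  eq_of_nhds_neBot ((hy.continuousAt_comp hg).clusterPt.mono hgz)

lemma IsCompact.tendsto_nhds_of_tendsto_comp {α X Y : Type*} [TopologicalSpace X]
    [TopologicalSpace Y] [T2Space Y] {K : Set X} (hK : IsCompact K) {l : Filter α} {z : α → X}
    (hzK : ∀ᶠ a in l, z a ∈ K) {g : X → Y} (hg : Continuous g) {c : Y}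
    (hgz : Tendsto (g ∘ z) l (𝓝 c)) {p : X} (huniq : ∀ q ∈ K, g q = c → q = p) :
    Tendsto z l (𝓝 p) :=
  hK.tendsto_nhds_of_unique_mapClusterPt hzK fun q hq hclus =>
    huniq q hq (hclus.eq_of_tendsto_comp hg.continuousAt hgz)

lemma intervalIntegrable_apply_of_continuousOn_Ici {ι : Type*} {x : ℝ → ι → ℝ} {a b c : ℝ}
    (hx : ContinuousOn x (Ici a)) (hb : a ≤ b) (hc : a ≤ c) (k : ι) :
    IntervalIntegrable (fun t => x t k) volume b c :=
  ((continuous_apply k).comp_continuousOn hx |>.mono fun _ ht =>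
    (le_min hb hc).trans ht.1).intervalIntegrable

noncomputable def timeAverage (f : ℝ → ℝ) (T : ℝ) : ℝ :=
  T⁻¹ * ∫ t in (0 : ℝ)..T, f t

lemma tendsto_inv_mul_of_eventually_norm_le {c : ℝ → ℝ} {C : ℝ}
    (h : ∀ᶠ T in atTop, ‖c T‖ ≤ C) : Tendsto (fun T => T⁻¹ * c T) atTop (𝓝 0) :=
  tendsto_inv_atTop_zero.zero_mul_isBoundedUnder_le (isBoundedUnder_of_eventually_le h)

section TimeAverage

variable {T : ℝ}

lemma timeAverage_const {c : ℝ} (hT : T ≠ 0) : timeAverage (fun _ => c) T = c := by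
  rw [timeAverage, intervalIntegral.integral_const, sub_zero, smul_eq_mul, inv_mul_cancel_left₀ hT]

lemma timeAverage_congr {f g : ℝ → ℝ} (hT : 0 ≤ T) (h : EqOn f g (Icc 0 T)) :
    timeAverage f T = timeAverage g T := by
  rw [timeAverage, timeAverage, intervalIntegral.integral_congr (by rwa [uIcc_of_le hT])]

lemma le_timeAverage {f : ℝ → ℝ} {c : ℝ} (hT : 0 < T) (hf : IntervalIntegrable f volume 0 T)
    (hc : ∀ t ∈ Icc 0 T, c ≤ f t) : c ≤ timeAverage f T := by
  have h := intervalIntegral.integral_mono_on hT.le intervalIntegrable_const hf hc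
  rw [intervalIntegral.integral_const, sub_zero, smul_eq_mul] at h
  rw [timeAverage, le_inv_mul_iff₀ hT]
  exact h

variable {ι : Type*} [Fintype ι]

lemma timeAverage_dotProduct {f : ℝ → ι → ℝ} (c : ι → ℝ)
    (hf : ∀ k, IntervalIntegrable (fun t => f t k) volume 0 T) :
    timeAverage (fun t => c ⬝ᵥ f t) T = c ⬝ᵥ fun k => timeAverage (fun t => f t k) T := by
  simp only [timeAverage, dotProduct]
  rw [intervalIntegral.integral_finsetSum fun k _ => (hf k).const_mul (c k), Finset.mul_sum]
  refine Finset.sum_congr rfl fun k _ => ?_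
  rw [intervalIntegral.integral_const_mul]
  ring

lemma timeAverage_mem_stdSimplex {f : ℝ → ι → ℝ} (hT : 0 < T)
    (hf : ∀ k, IntervalIntegrable (fun t => f t k) volume 0 T)
    (hsimplex : ∀ t ∈ Icc 0 T, f t ∈ stdSimplex ℝ ι) :
    (fun k => timeAverage (fun t => f t k) T) ∈ stdSimplex ℝ ι := by
  refine ⟨fun k => le_timeAverage hT (hf k) fun t ht => (hsimplex t ht).1 k, ?_⟩
  rw [← one_dotProduct, ← timeAverage_dotProduct 1 hf,
    timeAverage_congr hT.le (g := fun _ => 1) fun t ht =>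
      (one_dotProduct _).trans (hsimplex t ht).2,
    timeAverage_const hT.ne']

end TimeAverage

lemma tendsto_timeAverage_of_hasDerivAt_mul {u a : ℝ → ℝ} {ε M : ℝ} (hε : 0 < ε)
    (hu : ∀ t, 0 ≤ t → u t ∈ Icc ε M) (hucont : ContinuousOn u (Ici 0))
    (hderiv : ∀ t, 0 < t → HasDerivAt u (u t * a t) t) (ha : ContinuousOn a (Ici 0)) :
    Tendsto (timeAverage a) atTop (𝓝 0) := by
  have hpos : ∀ t, 0 ≤ t → 0 < u t := fun t ht => hε.trans_le (hu t ht).1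
  have hlog : ∀ T, 0 < T → ∫ t in (0 : ℝ)..T, a t = Real.log (u T) - Real.log (u 0) := by
    intro T hT
    refine intervalIntegral.integral_eq_sub_of_hasDeriv_right_of_le hT.le
      ((hucont.mono Icc_subset_Ici_self).log fun t ht => (hpos t ht.1).ne') (fun t ht => ?_)
      ((ha.mono Icc_subset_Ici_self).intervalIntegrable_of_Icc hT.le)
    have h := (hderiv t ht.1).log (hpos t ht.1.le).ne'
    rw [mul_div_cancel_left₀ _ (hpos t ht.1.le).ne'] at h
    exact h.hasDerivWithinAt
  have hlog_mem : ∀ t, 0 ≤ t → Real.log (u t) ∈ Icc (Real.log ε) (Real.log M) := fun t ht =>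
    ⟨Real.log_le_log hε (hu t ht).1, Real.log_le_log (hpos t ht) (hu t ht).2⟩
  refine tendsto_inv_mul_of_eventually_norm_le (C := Real.log M - Real.log ε) ?_
  filter_upwards [eventually_gt_atTop 0] with T hT
  have h0 := hlog_mem 0 le_rfl
  have hT' := hlog_mem T hT.le
  rw [hlog T hT, Real.norm_eq_abs, abs_le]
  constructor <;> linarith [h0.1, h0.2, hT'.1, hT'.2]

lemma tendsto_timeAverage_comp_sub_sub {f : ℝ → ℝ} {r M : ℝ} (hr : 0 ≤ r)
    (hf : ContinuousOn f (Ici (-r))) (hM : ∀ t, -r ≤ t → ‖f t‖ ≤ M) :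
    Tendsto (fun T => timeAverage (fun t => f (t - r)) T - timeAverage f T) atTop (𝓝 0) := by
  have hint : ∀ a b, -r ≤ a → -r ≤ b → IntervalIntegrable f volume a b := fun a b ha hb =>
    (hf.mono fun t ht => (le_min ha hb).trans ht.1).intervalIntegrable
  have hbound : ∀ a b, -r ≤ a → -r ≤ b → ‖∫ t in a..b, f t‖ ≤ M * |b - a| := fun a b ha hb =>
    intervalIntegral.norm_integral_le_of_norm_le_const fun t ht =>
      hM t ((le_min ha hb).trans ht.1.le)
  refine (tendsto_inv_mul_of_eventually_norm_le (C := M * |r| + M * |r|) ?_).congr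
    fun T => mul_sub _ _ _
  filter_upwards [eventually_ge_atTop 0] with T hT
  -- the two averages differ only by the integrals over `[-r, 0]` and `[T - r, T]`
  rw [intervalIntegral.integral_comp_sub_right, zero_sub,
    intervalIntegral.integral_interval_sub_interval_comm (hint _ _ le_rfl (by linarith))
      (hint _ _ (by linarith) (by linarith)) (hint _ _ le_rfl (by linarith))]
  refine (norm_sub_le _ _).trans (add_le_add ?_ ?_)
  · simpa using hbound (-r) 0 le_rfl (by linarith)
  · simpa using hbound (T - r) T (by linarith) (by linarith)

section Replicator

variable {ι : Type*} [Fintype ι] {A : Matrix ι ι ℝ} {r ε : ℝ} {x : ℝ → ι → ℝ}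

lemma tendsto_timeAverage_delayedPayoff_sub (hr : 0 ≤ r) (hxcont : ContinuousOn x (Ici (-r)))
    (hxsimplex : ∀ t : ℝ, -r ≤ t → x t ∈ stdSimplex ℝ ι)
    (hode : ∀ t : ℝ, 0 < t →
      HasDerivAt x
        (fun i => x t i * (A.mulVec (x (t - r)) i - ∑ k, x t k * A.mulVec (x (t - r)) k))
        t)
    (hε : 0 < ε) (hint : ∀ t : ℝ, 0 ≤ t → ∀ i, ε ≤ x t i) (i j : ι) :
    Tendsto (timeAverage fun t => (A i - A j) ⬝ᵥ x (t - r)) atTop (𝓝 0) := by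
  have hxc : ∀ k, ContinuousOn (fun t => x t k) (Ici 0) := fun k =>
    ((continuous_apply k).comp_continuousOn hxcont).mono (Ici_subset_Ici.2 (by linarith))
  have hxpos : ∀ t, 0 ≤ t → ∀ k, 0 < x t k := fun t ht k => hε.trans_le (hint t ht k)
  have hxle : ∀ t, 0 ≤ t → ∀ k, x t k ≤ 1 := fun t ht k =>
    (mem_Icc_of_mem_stdSimplex (hxsimplex t (by linarith)) k).2
  -- the common average payoff cancels in the log-derivative of `x i / x j`
  refine tendsto_timeAverage_of_hasDerivAt_mul (u := fun t => x t i / x t j) (M := 1 / ε) hε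
    (fun t ht => ⟨(hint t ht i).trans (le_div_self (hxpos t ht i).le (hxpos t ht j) (hxle t ht j)),
      div_le_div₀ zero_le_one (hxle t ht i) hε (hint t ht j)⟩)
    ((hxc i).div (hxc j) fun t ht => (hxpos t ht j).ne') (fun t ht => ?_) ?_
  · have hi := hasDerivAt_pi.1 (hode t ht) i
    have hj := hasDerivAt_pi.1 (hode t ht) j
    refine (hi.div hj (hxpos t ht.le j).ne').congr_deriv ?_
    rw [sub_dotProduct]
    change _ = _ * (A.mulVec _ i - A.mulVec _ j)
    field_simp
    ring
  · refine (continuous_const.dotProduct continuous_id).comp_continuousOn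
      (hxcont.comp (continuous_sub_right r).continuousOn fun t ht => ?_)
    simp only [mem_Ici] at ht ⊢
    linarith

lemma tendsto_mulVec_timeAverage_sub (hr : 0 ≤ r) (hxcont : ContinuousOn x (Ici (-r)))
    (hxsimplex : ∀ t : ℝ, -r ≤ t → x t ∈ stdSimplex ℝ ι)
    (hode : ∀ t : ℝ, 0 < t →
      HasDerivAt x
        (fun i => x t i * (A.mulVec (x (t - r)) i - ∑ k, x t k * A.mulVec (x (t - r)) k))
        t)
    (hε : 0 < ε) (hint : ∀ t : ℝ, 0 ≤ t → ∀ i, ε ≤ x t i) (i j : ι) :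
    Tendsto (fun T => A.mulVec (fun k => timeAverage (fun t => x t k) T) i -
      A.mulVec (fun k => timeAverage (fun t => x t k) T) j) atTop (𝓝 0) := by
  have hpayoff : Continuous fun q : ι → ℝ => (A i - A j) ⬝ᵥ q :=
    continuous_const.dotProduct continuous_id
  obtain ⟨M, hM⟩ := (isCompact_stdSimplex ℝ ι).exists_bound_of_continuousOn hpayoff.continuousOn
  have hshift := tendsto_timeAverage_comp_sub_sub (f := fun t => (A i - A j) ⬝ᵥ x t) hr
    (hpayoff.comp_continuousOn hxcont) fun t ht => hM _ (hxsimplex t ht)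
  have hlim := (tendsto_timeAverage_delayedPayoff_sub hr hxcont hxsimplex hode hε hint i j).sub
    hshift
  rw [sub_zero] at hlim
  refine hlim.congr' ?_
  filter_upwards [eventually_ge_atTop 0] with T hT
  rw [sub_sub_cancel, timeAverage_dotProduct _
    (intervalIntegrable_apply_of_continuousOn_Ici hxcont (by linarith) (by linarith))]
  exact sub_dotProduct _ _ _

end Replicator

theorem stmt_8_general (d : ℕ) (A : Matrix (Fin d) (Fin d) ℝ) (r : ℝ) (hr : 0 ≤ r)
    (x : ℝ → Fin d → ℝ)
    (hxcont : ContinuousOn x (Set.Ici (-r)))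
    (hxsimplex : ∀ t : ℝ, -r ≤ t → x t ∈ stdSimplex ℝ (Fin d))
    (hode : ∀ t : ℝ, 0 < t →
      HasDerivAt x
        (fun i => x t i * (A.mulVec (x (t - r)) i - ∑ k, x t k * A.mulVec (x (t - r)) k))
        t)
    (ε : ℝ) (hε : 0 < ε) (hint : ∀ t : ℝ, 0 ≤ t → ∀ i, ε ≤ x t i)
    (p : Fin d → ℝ)
    (hpuniq : ∀ q ∈ stdSimplex ℝ (Fin d),
      (∀ i, 0 < q i) → (∀ i j, A.mulVec q i = A.mulVec q j) → q = p) :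
    ∀ i, Tendsto (fun T : ℝ => T⁻¹ * ∫ t in (0:ℝ)..T, x t i) atTop (nhds (p i)) := by
  set K := stdSimplex ℝ (Fin d) ∩ ⋂ i, {q : Fin d → ℝ | ε ≤ q i}
  have hK : IsCompact K := (isCompact_stdSimplex ℝ _).inter_right
    (isClosed_iInter fun i => isClosed_le continuous_const (continuous_apply i))
  have hzK : ∀ᶠ T in atTop, (fun k => timeAverage (fun t => x t k) T) ∈ K := by
    filter_upwards [eventually_gt_atTop 0] with T hT
    have hxint := intervalIntegrable_apply_of_continuousOn_Ici hxcont (b := 0) (c := T)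
      (by linarith) (by linarith)
    exact ⟨timeAverage_mem_stdSimplex hT hxint fun t ht => hxsimplex t (by linarith [ht.1]),
      mem_iInter.2 fun k => le_timeAverage hT (hxint k) fun t ht => hint t ht.1 k⟩
  have hpayoff : Continuous fun (q : Fin d → ℝ) (ij : Fin d × Fin d) =>
      A.mulVec q ij.1 - A.mulVec q ij.2 := by
    fun_prop
  have hlim := hK.tendsto_nhds_of_tendsto_comp hzK hpayoff (c := 0)
    (tendsto_pi_nhds.2 fun ij =>
      tendsto_mulVec_timeAverage_sub hr hxcont hxsimplex hode hε hint ij.1 ij.2)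
    fun q hq hq0 => hpuniq q hq.1 (fun i => hε.trans_le (mem_iInter.1 hq.2 i))
      fun i j => sub_eq_zero.1 (congr_fun hq0 (i, j))
  exact tendsto_pi_nhds.1 hlim

/-- Time-averaging for the discrete-delay replicator equation: if an interior
solution of `xᵢ'(t) = xᵢ(t)[(A x(t−r))ᵢ − ⟨x(t), A x(t−r)⟩]` stays bounded away from the
boundary of the simplex and `p` is the unique interior rest point of the replicator ODE
(all components of `Ap` equal), then the time averages `(1/T)∫₀^T xᵢ(t) dt` converge to `pᵢ`. -/
theorem stmt_8 (d : ℕ) (hd : 2 ≤ d) (A : Matrix (Fin d) (Fin d) ℝ) (r : ℝ) (hr : 0 ≤ r)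
    (x : ℝ → Fin d → ℝ)
    (hxcont : ContinuousOn x (Set.Ici (-r)))
    (hxsimplex : ∀ t : ℝ, -r ≤ t → x t ∈ stdSimplex ℝ (Fin d))
    (hode : ∀ t : ℝ, 0 < t →
      HasDerivAt x
        (fun i => x t i * (A.mulVec (x (t - r)) i - ∑ k, x t k * A.mulVec (x (t - r)) k))
        t)
    (ε : ℝ) (hε : 0 < ε) (hint : ∀ t : ℝ, 0 ≤ t → ∀ i, ε ≤ x t i)
    (p : Fin d → ℝ) (hp : p ∈ stdSimplex ℝ (Fin d)) (hppos : ∀ i, 0 < p i)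
    (hpeq : ∀ i j, A.mulVec p i = A.mulVec p j)
    (hpuniq : ∀ q ∈ stdSimplex ℝ (Fin d),
      (∀ i, 0 < q i) → (∀ i j, A.mulVec q i = A.mulVec q j) → q = p) :
    ∀ i, Tendsto (fun T : ℝ => T⁻¹ * ∫ t in (0:ℝ)..T, x t i) atTop (nhds (p i)) :=
  stmt_8_general d A r hr x hxcont hxsimplex hode ε hε hint p hpuniq
end

section
/- Let d ≥ 2, let A be a real d×d matrix, r ≥ 0, and let x : [−r,∞) → ℝ^d be continuous, differentiable on (0,∞), with x(t) ∈ Δ_d for all t ≥ −r, satisfying the discrete-delay replicator equation x_i′(t) = x_i(t)·[(A x(t−r))_i − ⟨x(t), A x(t−r)⟩] for all t > 0 and all i ∈ {1,…,d}. Assume the replicator ODE has no interior rest point, i.e., there is no q ∈ Δ_d with q_i > 0 for all i and (Aq)_1 = (Aq)_2 = ⋯ = (Aq)_d. Then liminf_{t→∞} min_{1≤i≤d} x_i(t) = 0; that is, the solution is not bounded away from the boundary of the simplex Δ_d. -/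
/-!
If `minᵢ xᵢ(t)` stayed above some `m > 0`, then both `x(t)` and `x(t - r)` would eventually lie in
the compact convex set `K = {q ∈ Δ | q ≥ m}`, which contains no rest point. Separating `A K` from
the line of constant vectors gives `p` with `∑ pᵢ = 0` and `⟨p, A q⟩ ≥ ε` on `K`. Along the
solution, `V = ∑ pᵢ log xᵢ` has `V' = ⟨p, A x(t - r)⟩ ≥ ε` (the mean payoff drops out since
`∑ pᵢ = 0`), so `V → ∞`; but `V` is bounded on `K`.
-/

open Filter Matrix

theorem exists_sum_eq_zero_forall_le_dotProduct {ι : Type*} [Fintype ι] {C : Set (ι → ℝ)}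
    (hCc : IsCompact C) (hCconv : Convex ℝ C) (hC : ∀ y ∈ C, ¬∀ i j, y i = y j) :
    ∃ p : ι → ℝ, ∑ i, p i = 0 ∧ ∃ ε > 0, ∀ y ∈ C, ε ≤ p ⬝ᵥ y := by
  classical
  have hdisj : Disjoint C (ℝ ∙ (1 : ι → ℝ)) := by
    refine Set.disjoint_left.2 fun y hyC hy => hC y hyC fun i j => ?_
    obtain ⟨a, rfl⟩ := Submodule.mem_span_singleton.1 hy
    simp
  obtain ⟨φ, u, v, hφC, huv, hφW⟩ := geometric_hahn_banach_compact_closed hCconv hCc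
    (ℝ ∙ (1 : ι → ℝ)).convex (Submodule.closed_of_finiteDimensional _) hdisj
  -- a linear functional bounded below on a line through the origin vanishes on it
  have hφ1 : φ 1 = 0 := by
    by_contra h
    have := hφW (((v - 1) / φ 1) • 1)
      (Submodule.smul_mem _ _ (Submodule.mem_span_singleton_self _))
    rw [map_smul, smul_eq_mul, div_mul_cancel₀ _ h] at this
    linarith
  have hv : v < 0 := by simpa using hφW 0 (zero_mem _)
  have hp : ∀ y, (fun i => -φ fun j => if i = j then 1 else 0) ⬝ᵥ y = -φ y := fun y => by
    simpa [dotProduct, mul_comm] using (φ.toLinearMap.pi_apply_eq_sum_univ y).symm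
  refine ⟨_, ?_, -u, by linarith, fun y hy => (hp y).symm ▸ neg_le_neg (hφC y hy).le⟩
  rw [← dotProduct_one, hp, hφ1, neg_zero]

theorem HasDerivAt.dotProduct_log {ι : Type*} [Fintype ι] {x : ℝ → ι → ℝ} {g : ι → ℝ}
    {t : ℝ} (p : ι → ℝ) (hx : HasDerivAt x (fun i => x t i * g i) t) (hx0 : ∀ i, x t i ≠ 0) :
    HasDerivAt (fun s => p ⬝ᵥ fun i => Real.log (x s i)) (p ⬝ᵥ g) t := by
  refine HasDerivAt.fun_sum fun i _ => ?_
  have := ((hasDerivAt_pi.1 hx i).log (hx0 i)).const_mul (p i)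
  rwa [mul_div_cancel_left₀ _ (hx0 i)] at this

theorem tendsto_atTop_of_eventually_hasDerivAt_ge {f f' : ℝ → ℝ} {ε : ℝ} (hε : 0 < ε)
    (hf : ∀ᶠ t in atTop, HasDerivAt f (f' t) t ∧ ε ≤ f' t) : Tendsto f atTop atTop := by
  obtain ⟨a, ha⟩ := eventually_atTop.1 hf
  have hgrow : ∀ t ≥ a, ε * (t - a) ≤ f t - f a := by
    refine fun t ht => (convex_Ici a).mul_sub_le_image_sub_of_le_deriv
      (fun s hs => (ha s hs).1.continuousAt.continuousWithinAt)
      (fun s hs => (ha s (interior_subset hs)).1.differentiableAt.differentiableWithinAt)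
      (fun s hs => ?_) a Set.self_mem_Ici t ht ht
    rw [(ha s (interior_subset hs)).1.deriv]
    exact (ha s (interior_subset hs)).2
  refine tendsto_atTop_mono' _ ((eventually_ge_atTop a).mono fun t ht => ?_)
    (tendsto_atTop_add_const_left _ (f a)
      ((tendsto_atTop_add_const_right _ (-a) tendsto_id).const_mul_atTop hε))
  rw [id]
  linarith [hgrow t ht]

theorem Filter.liminf_eq_zero_of_forall_not_eventually_le {α : Type*} {l : Filter α} [l.NeBot]
    {f : α → ℝ} (h0 : ∀ᶠ a in l, 0 ≤ f a) (h : ∀ m > 0, ¬∀ᶠ a in l, m ≤ f a) :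
    liminf f l = 0 := by
  have hcobdd : IsCoboundedUnder (· ≥ ·) l f :=
    ⟨1, fun m hm => not_lt.1 fun h1 => h m (by linarith) hm⟩
  refine le_antisymm (not_lt.1 fun hpos => h _ (half_pos hpos) ?_) (le_liminf_of_le hcobdd h0)
  exact (eventually_lt_of_lt_liminf (half_lt_self hpos) (isBoundedUnder_of_eventually_ge h0)).mono
    fun a ha => ha.le

theorem not_eventually_mem_of_replicator_delay {ι : Type*} [Fintype ι] {A : Matrix ι ι ℝ}
    {r : ℝ} {c : ℝ → ℝ} {x : ℝ → ι → ℝ} {K : Set (ι → ℝ)} (hKc : IsCompact K)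
    (hKconv : Convex ℝ K) (hKpos : ∀ q ∈ K, ∀ i, 0 < q i)
    (hKrest : ∀ q ∈ K, ¬∀ i j, (A *ᵥ q) i = (A *ᵥ q) j)
    (hode : ∀ᶠ t in atTop, HasDerivAt x (fun i => x t i * ((A *ᵥ x (t - r)) i - c t)) t) :
    ¬∀ᶠ t in atTop, x t ∈ K := by
  intro hxK
  obtain ⟨p, hp, ε, hε, hpε⟩ := exists_sum_eq_zero_forall_le_dotProduct
    (hKc.image A.mulVecLin.continuous_of_finiteDimensional) (hKconv.linear_image _)
    (by simpa [mulVecLin_apply] using hKrest)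
  set V : (ι → ℝ) → ℝ := fun q => p ⬝ᵥ fun i => Real.log (q i)
  have hVK : BddAbove (V '' K) := hKc.bddAbove_image <|
    continuousOn_finsetSum _ fun i _ => continuousOn_const.mul <|
      (continuous_apply i).continuousOn.log fun q hq => (hKpos q hq i).ne'
  have hV : Tendsto (V ∘ x) atTop atTop := by
    refine tendsto_atTop_of_eventually_hasDerivAt_ge
      (f' := fun t => p ⬝ᵥ fun i => (A *ᵥ x (t - r)) i - c t) hε ?_
    filter_upwards [hode, hxK, (tendsto_atTop_add_const_right atTop (-r) tendsto_id).eventually hxK]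
      with t hxt hxtK hxtrK
    refine ⟨hxt.dotProduct_log p fun i => (hKpos _ hxtK i).ne', ?_⟩
    simp only [dotProduct, mul_sub, Finset.sum_sub_distrib, ← Finset.sum_mul, hp, zero_mul,
      sub_zero]
    exact hpε _ ⟨_, hxtrK, rfl⟩
  obtain ⟨B, hB⟩ := hVK
  obtain ⟨t, htB, htK⟩ := ((hV.eventually_gt_atTop B).and hxK).exists
  exact htB.not_ge (hB ⟨x t, htK, rfl⟩)

theorem stmt_10_general (d : ℕ) (A : Matrix (Fin d) (Fin d) ℝ) (r : ℝ)
    (x : ℝ → Fin d → ℝ)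
    (hxsimplex : ∀ t : ℝ, -r ≤ t → x t ∈ stdSimplex ℝ (Fin d))
    (hode : ∀ t : ℝ, 0 < t →
      HasDerivAt x
        (fun i => x t i * (A.mulVec (x (t - r)) i - ∑ k, x t k * A.mulVec (x (t - r)) k))
        t)
    (hnorest : ¬∃ q ∈ stdSimplex ℝ (Fin d),
      (∀ i, 0 < q i) ∧ ∀ i j, A.mulVec q i = A.mulVec q j) :
    Filter.liminf (fun t : ℝ => ⨅ i, x t i) atTop = 0 := by
  have hsimplex : ∀ᶠ t in atTop, x t ∈ stdSimplex ℝ (Fin d) :=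
    (eventually_ge_atTop (-r)).mono hxsimplex
  refine liminf_eq_zero_of_forall_not_eventually_le
    (hsimplex.mono fun t ht => Real.iInf_nonneg ht.1) fun m hm hxm => ?_
  let K := stdSimplex ℝ (Fin d) ∩ Set.univ.pi fun _ => Set.Ici m
  refine not_eventually_mem_of_replicator_delay (K := K)
    ((isCompact_stdSimplex _ _).inter_right (isClosed_set_pi fun _ _ => isClosed_Ici))
    ((convex_stdSimplex ℝ _).inter (convex_pi fun _ _ => convex_Ici m))
    (fun q hq i => hm.trans_le (hq.2 i trivial))
    (fun q hq hrest => hnorest ⟨q, hq.1, fun i => hm.trans_le (hq.2 i trivial), hrest⟩)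
    ((eventually_gt_atTop 0).mono hode) ?_
  filter_upwards [hsimplex, hxm] with t hxt hmt
  exact ⟨hxt, fun i _ => hmt.trans (ciInf_le (Set.finite_range _).bddBelow i)⟩

/-- If the replicator ODE has no interior rest point, then every solution of
the discrete-delay replicator equation taking values in the simplex satisfies
`liminf_{t→∞} minᵢ xᵢ(t) = 0`, i.e. it is not bounded away from the boundary of the simplex. -/
theorem stmt_10 (d : ℕ) (hd : 2 ≤ d) (A : Matrix (Fin d) (Fin d) ℝ) (r : ℝ) (hr : 0 ≤ r)
    (x : ℝ → Fin d → ℝ)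
    (hxcont : ContinuousOn x (Set.Ici (-r)))
    (hxsimplex : ∀ t : ℝ, -r ≤ t → x t ∈ stdSimplex ℝ (Fin d))
    (hode : ∀ t : ℝ, 0 < t →
      HasDerivAt x
        (fun i => x t i * (A.mulVec (x (t - r)) i - ∑ k, x t k * A.mulVec (x (t - r)) k))
        t)
    (hnorest : ¬∃ q ∈ stdSimplex ℝ (Fin d),
      (∀ i, 0 < q i) ∧ ∀ i j, A.mulVec q i = A.mulVec q j) :
    Filter.liminf (fun t : ℝ => ⨅ i, x t i) atTop = 0 :=
  stmt_10_general d A r x hxsimplex hode hnorest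
end

section
/- Let d ≥ 2, let A be a real d×d matrix, r ≥ 0, let μ be a Borel probability measure on [−r,0], and let x : [−r,∞) → ℝ^d be continuous, differentiable on (0,∞), with x(t) ∈ Δ_d for all t ≥ −r, satisfying the distributed-delay replicator equation x_i′(t) = x_i(t)·[(A x̄(t))_i − ⟨x(t), A x̄(t)⟩] for all t > 0 and all i ∈ {1,…,d}, where x̄(t) = ∫_{−r}^0 x(t+s) dμ(s). Assume the replicator ODE has no interior rest point, i.e., there is no q ∈ Δ_d with q_i > 0 for all i and (Aq)_1 = (Aq)_2 = ⋯ = (Aq)_d. Then liminf_{t→∞} min_{1≤i≤d} x_i(t) = 0; that is, the solution is not bounded away from the boundary of the simplex Δ_d. -/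
/-!
If the solution eventually stayed in `{q ∈ Δ : q_i ≥ δ}`, so would its delayed average `x̄`, as `μ`
is a probability measure on `[-r, 0]`. Without an interior rest point, the compact convex set
`A {q ∈ Δ : q_i ≥ δ}` misses the line of constant vectors, so Hahn–Banach gives `c` with
`∑ c_i = 0` and `⟨c, A q⟩ ≥ u > 0` on that set. Then `V = ∑ c_i log x_i` has `V' = ⟨c, A x̄⟩ ≥ u`
(the mean payoff drops out since `∑ c_i = 0`), so `V → ∞`, contradicting `|log x_i| ≤ -log δ`.
-/

open Filter MeasureTheory Set Matrix

section Simplex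

variable {ι : Type*} [Fintype ι]

theorem exists_sum_eq_zero_pos_le_dotProduct {K : Set (ι → ℝ)} (hKc : IsCompact K)
    (hKconv : Convex ℝ K) (hK : ∀ v ∈ K, ∃ i j, v i ≠ v j) :
    ∃ c : ι → ℝ, ∑ i, c i = 0 ∧ ∃ u > 0, ∀ v ∈ K, u ≤ c ⬝ᵥ v := by
  classical
  have hdisj : Disjoint K (Submodule.span ℝ {(1 : ι → ℝ)}) := by
    refine Set.disjoint_left.2 fun v hvK hv => ?_
    obtain ⟨m, rfl⟩ := Submodule.mem_span_singleton.1 hv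
    obtain ⟨i, j, hij⟩ := hK _ hvK
    simp at hij
  obtain ⟨f, u, w, hfK, huw, hfw⟩ := geometric_hahn_banach_compact_closed hKconv hKc
    (Submodule.span ℝ {(1 : ι → ℝ)}).convex (Submodule.closed_of_finiteDimensional _) hdisj
  -- `f` is bounded below on the line of constants, so it vanishes there
  have hf1 : f 1 = 0 := by
    by_contra h
    have := hfw (((w - 1) / f 1) • 1)
      (Submodule.smul_mem _ _ (Submodule.mem_span_singleton_self _))
    rw [map_smul, smul_eq_mul, div_mul_cancel₀ _ h] at this
    linarith
  have hw : w < 0 := by simpa using hfw 0 (zero_mem _)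
  set c := (dotProductEquiv ℝ ι).symm (-f.toLinearMap)
  have hc : ∀ v, c ⬝ᵥ v = -f v := fun v =>
    LinearMap.congr_fun ((dotProductEquiv ℝ ι).apply_symm_apply _) v
  refine ⟨c, by rw [← dotProduct_one, hc, hf1, neg_zero], -u, by linarith, fun v hv => ?_⟩
  rw [hc]
  linarith [hfK v hv]

theorem iInf_mem_Icc_of_mem_stdSimplex [Nonempty ι] {q : ι → ℝ} (hq : q ∈ stdSimplex ℝ ι) :
    ⨅ i, q i ∈ Icc 0 1 :=
  ⟨le_ciInf hq.1, (ciInf_le (Finite.bddBelow_range _) (Classical.arbitrary _)).trans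
    (mem_Icc_of_mem_stdSimplex hq _).2⟩

def simplexAbove (δ : ℝ) : Set (ι → ℝ) := stdSimplex ℝ ι ∩ univ.pi fun _ => Ici δ

theorem isCompact_simplexAbove (δ : ℝ) : IsCompact (simplexAbove (ι := ι) δ) :=
  (isCompact_stdSimplex ℝ ι).inter_right (isClosed_set_pi fun _ _ => isClosed_Ici)

theorem isClosed_simplexAbove (δ : ℝ) : IsClosed (simplexAbove (ι := ι) δ) :=
  (isClosed_stdSimplex ℝ ι).inter (isClosed_set_pi fun _ _ => isClosed_Ici)

theorem convex_simplexAbove (δ : ℝ) : Convex ℝ (simplexAbove (ι := ι) δ) :=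
  (convex_stdSimplex ℝ ι).inter (convex_pi fun _ _ => convex_Ici δ)

theorem exists_sum_eq_zero_pos_le_dotProduct_mulVec (A : Matrix ι ι ℝ) {δ : ℝ} (hδ : 0 < δ)
    (hA : ¬∃ q ∈ stdSimplex ℝ ι, (∀ i, 0 < q i) ∧ ∀ i j, (A *ᵥ q) i = (A *ᵥ q) j) :
    ∃ c : ι → ℝ, ∑ i, c i = 0 ∧ ∃ u > 0, ∀ q ∈ simplexAbove δ, u ≤ c ⬝ᵥ A *ᵥ q := by
  obtain ⟨c, hc, u, hu, hcu⟩ := exists_sum_eq_zero_pos_le_dotProduct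
    ((isCompact_simplexAbove δ).image A.mulVecLin.continuous_of_finiteDimensional)
    ((convex_simplexAbove δ).linear_image A.mulVecLin) (by
      rintro _ ⟨q, ⟨hq, hqδ⟩, rfl⟩
      by_contra! hconst
      exact hA ⟨q, hq, fun i => hδ.trans_le (hqδ i trivial), hconst⟩)
  exact ⟨c, hc, u, hu, fun q hq => hcu _ (mem_image_of_mem _ hq)⟩

theorem sum_mul_log_le {c q : ι → ℝ} {δ : ℝ} (hδ : 0 < δ) (hq : ∀ i, q i ∈ Icc δ 1) :
    ∑ i, c i * Real.log (q i) ≤ ∑ i, |c i| * -Real.log δ := by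
  refine Finset.sum_le_sum fun i _ => ?_
  have hlog : |Real.log (q i)| ≤ -Real.log δ := by
    rw [abs_of_nonpos (Real.log_nonpos (hδ.le.trans (hq i).1) (hq i).2), neg_le_neg_iff]
    exact Real.log_le_log hδ (hq i).1
  calc c i * Real.log (q i) ≤ |c i| * |Real.log (q i)| := (le_abs_self _).trans (abs_mul _ _).le
    _ ≤ |c i| * -Real.log δ := mul_le_mul_of_nonneg_left hlog (abs_nonneg _)

theorem hasDerivAt_sum_mul_log_of_replicator {x : ℝ → ι → ℝ} {p c : ι → ℝ} {t : ℝ}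
    (hc : ∑ i, c i = 0) (hxpos : ∀ i, 0 < x t i)
    (hx : HasDerivAt x (fun i => x t i * (p i - ∑ k, x t k * p k)) t) :
    HasDerivAt (fun τ => ∑ i, c i * Real.log (x τ i)) (c ⬝ᵥ p) t := by
  have hlog (i : ι) : HasDerivAt (fun τ => Real.log (x τ i)) (p i - ∑ k, x t k * p k) t := by
    simpa [mul_div_cancel_left₀ _ (hxpos i).ne'] using (hasDerivAt_pi.1 hx i).log (hxpos i).ne'
  refine (HasDerivAt.fun_sum fun i _ => (hlog i).const_mul (c i)).congr_deriv ?_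
  simp only [mul_sub, Finset.sum_sub_distrib, ← Finset.sum_mul, hc, zero_mul, sub_zero,
    dotProduct]

end Simplex

theorem tendsto_atTop_of_pos_le_hasDerivAt {f f' : ℝ → ℝ} {T u : ℝ} (hu : 0 < u)
    (hf : ∀ t ≥ T, HasDerivAt f (f' t) t) (hf' : ∀ t ≥ T, u ≤ f' t) :
    Tendsto f atTop atTop := by
  have hgrowth : ∀ t ≥ T, f T + u * (t - T) ≤ f t := fun t ht => by
    have := (convex_Ici T).mul_sub_le_image_sub_of_le_deriv
      (fun s hs => (hf s hs).continuousAt.continuousWithinAt)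
      (fun s hs => (hf s (interior_subset hs)).differentiableAt.differentiableWithinAt)
      (fun s hs => (hf s (interior_subset hs)).deriv ▸ hf' s (interior_subset hs))
      T self_mem_Ici t ht ht
    linarith
  refine tendsto_atTop_mono' atTop ((eventually_ge_atTop T).mono hgrowth) ?_
  exact tendsto_atTop_add_const_left _ _
    ((tendsto_atTop_add_const_right _ _ tendsto_id).const_mul_atTop hu)

theorem setIntegral_mem_of_mapsTo {α E : Type*} [TopologicalSpace α] [MeasurableSpace α]
    [OpensMeasurableSpace α] [T2Space α] [NormedAddCommGroup E] [NormedSpace ℝ E]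
    [CompleteSpace E] {μ : Measure α} [IsFiniteMeasure μ] {S : Set α} (hS : IsCompact S)
    (hμS : μ S = 1) {g : α → E} (hg : ContinuousOn g S) {K : Set E} (hK : Convex ℝ K)
    (hKc : IsClosed K) (hgK : MapsTo g S K) : ∫ a in S, g a ∂μ ∈ K := by
  have : IsProbabilityMeasure (μ.restrict S) := ⟨by rw [Measure.restrict_apply_univ, hμS]⟩
  exact hK.integral_mem hKc (ae_restrict_of_forall_mem hS.measurableSet hgK)
    (hg.integrableOn_compact hS)

theorem replicator_not_eventually_mem_simplexAbove {ι : Type*} [Fintype ι]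
    (A : Matrix ι ι ℝ) {r : ℝ} (hr : 0 ≤ r)
    {μ : Measure ℝ} [IsFiniteMeasure μ] (hμ : μ (Icc (-r) 0) = 1) {x : ℝ → ι → ℝ}
    (hxcont : ContinuousOn x (Ici (-r)))
    (hode : ∀ t : ℝ, 0 < t →
      HasDerivAt x
        (fun i => x t i * ((A *ᵥ ∫ s in Icc (-r) 0, x (t + s) ∂μ) i -
          ∑ k, x t k * (A *ᵥ ∫ s in Icc (-r) 0, x (t + s) ∂μ) k)) t)
    (hA : ¬∃ q ∈ stdSimplex ℝ ι, (∀ i, 0 < q i) ∧ ∀ i j, (A *ᵥ q) i = (A *ᵥ q) j)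
    {δ : ℝ} (hδ : 0 < δ) : ¬∀ᶠ t in atTop, x t ∈ simplexAbove δ := by
  intro hev
  obtain ⟨T, hT⟩ := eventually_atTop.1 hev
  obtain ⟨c, hc, u, hu, hcu⟩ := exists_sum_eq_zero_pos_le_dotProduct_mulVec A hδ hA
  have hxbar : ∀ t ≥ max T 1 + r, ∫ s in Icc (-r) 0, x (t + s) ∂μ ∈ simplexAbove δ := by
    intro t ht
    refine setIntegral_mem_of_mapsTo isCompact_Icc hμ ?_ (convex_simplexAbove δ)
      (isClosed_simplexAbove δ) fun s hs => hT _ (by grind)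
    exact hxcont.comp (continuousOn_const.add continuousOn_id) fun s hs => by grind
  have hxpos : ∀ t ≥ T, ∀ i, 0 < x t i := fun t ht i => hδ.trans_le ((hT t ht).2 i trivial)
  have hV := tendsto_atTop_of_pos_le_hasDerivAt hu
    (fun t ht => hasDerivAt_sum_mul_log_of_replicator hc (hxpos t (by grind)) (hode t (by grind)))
    fun t ht => hcu _ (hxbar t ht)
  obtain ⟨t, hVt, ht⟩ := ((hV.eventually_gt_atTop (∑ i, |c i| * -Real.log δ)).and
    (eventually_ge_atTop T)).exists
  refine (sum_mul_log_le hδ fun i => ⟨(hT t ht).2 i trivial, ?_⟩).not_gt hVt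
  exact (mem_Icc_of_mem_stdSimplex (hT t ht).1 i).2

theorem stmt_11_general (d : ℕ) (A : Matrix (Fin d) (Fin d) ℝ) (r : ℝ) (hr : 0 ≤ r)
    (μ : Measure ℝ) [IsProbabilityMeasure μ] (hμ : μ (Set.Icc (-r) 0) = 1)
    (x : ℝ → Fin d → ℝ)
    (hxcont : ContinuousOn x (Set.Ici (-r)))
    (hxsimplex : ∀ t : ℝ, -r ≤ t → x t ∈ stdSimplex ℝ (Fin d))
    (hode : ∀ t : ℝ, 0 < t →
      HasDerivAt x
        (fun i =>
          x t i *
            (A.mulVec (∫ s in Set.Icc (-r) (0:ℝ), x (t + s) ∂μ) i -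
              ∑ k, x t k * A.mulVec (∫ s in Set.Icc (-r) (0:ℝ), x (t + s) ∂μ) k))
        t)
    (hnorest : ¬∃ q ∈ stdSimplex ℝ (Fin d),
      (∀ i, 0 < q i) ∧ ∀ i j, A.mulVec q i = A.mulVec q j) :
    Filter.liminf (fun t : ℝ => ⨅ i, x t i) atTop = 0 := by
  have : Nonempty (Fin d) := by
    by_contra h
    rw [not_nonempty_iff] at h
    simpa [stdSimplex_of_isEmpty_index] using hxsimplex (-r) le_rfl
  have hmin : ∀ᶠ t in atTop, ⨅ i, x t i ∈ Icc 0 1 :=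
    (eventually_ge_atTop (-r)).mono fun t ht => iInf_mem_Icc_of_mem_stdSimplex (hxsimplex t ht)
  have hbdd : IsBoundedUnder (· ≥ ·) atTop fun t => ⨅ i, x t i :=
    isBoundedUnder_of_eventually_ge (hmin.mono fun _ h => h.1)
  have hcobdd : IsCoboundedUnder (· ≥ ·) atTop fun t => ⨅ i, x t i :=
    (isBoundedUnder_of_eventually_le (hmin.mono fun _ h => h.2)).isCoboundedUnder_ge
  refine le_antisymm (not_lt.1 fun hL => ?_) (le_liminf_of_le hcobdd (hmin.mono fun _ h => h.1))
  refine replicator_not_eventually_mem_simplexAbove A hr hμ hxcont hode hnorest (half_pos hL) ?_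
  filter_upwards [eventually_lt_of_lt_liminf (half_lt_self hL) hbdd, eventually_ge_atTop (-r)]
    with t hδt ht
  exact ⟨hxsimplex t ht, fun i _ => hδt.le.trans (ciInf_le (Finite.bddBelow_range _) i)⟩

/-- If the replicator ODE has no interior rest point, then every solution of
the distributed-delay replicator equation (with delay distribution a Borel probability
measure `μ` on `[−r,0]`) taking values in the simplex satisfies
`liminf_{t→∞} minᵢ xᵢ(t) = 0`, i.e. it is not bounded away from the boundary of the simplex. -/
theorem stmt_11 (d : ℕ) (hd : 2 ≤ d) (A : Matrix (Fin d) (Fin d) ℝ) (r : ℝ) (hr : 0 ≤ r)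
    (μ : Measure ℝ) [IsProbabilityMeasure μ] (hμ : μ (Set.Icc (-r) 0) = 1)
    (x : ℝ → Fin d → ℝ)
    (hxcont : ContinuousOn x (Set.Ici (-r)))
    (hxsimplex : ∀ t : ℝ, -r ≤ t → x t ∈ stdSimplex ℝ (Fin d))
    (hode : ∀ t : ℝ, 0 < t →
      HasDerivAt x
        (fun i =>
          x t i *
            (A.mulVec (∫ s in Set.Icc (-r) (0:ℝ), x (t + s) ∂μ) i -
              ∑ k, x t k * A.mulVec (∫ s in Set.Icc (-r) (0:ℝ), x (t + s) ∂μ) k))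
        t)
    (hnorest : ¬∃ q ∈ stdSimplex ℝ (Fin d),
      (∀ i, 0 < q i) ∧ ∀ i j, A.mulVec q i = A.mulVec q j) :
    Filter.liminf (fun t : ℝ => ⨅ i, x t i) atTop = 0 :=
  stmt_11_general d A r hr μ hμ x hxcont hxsimplex hode hnorest
end

section
/- Let d ≥ 2, let A be a real d×d matrix, ε > 0, and let x : [0,∞) → ℝ^d be differentiable with x(t) ∈ Δ_d and x_i(t) ≥ ε for all t ≥ 0 and all i. Let y : [0,∞) → ℝ^d be measurable and locally integrable with y(t) ∈ Δ_d for all t, and suppose x_i′(t) = x_i(t)·[(A y(t))_i − ⟨x(t), A y(t)⟩] for all t > 0 and all i. Let (T_m) be a sequence with T_m → ∞ such that z := lim_{m→∞} (1/T_m)∫₀^{T_m} y(t) dt exists in ℝ^d. Then z ∈ Δ_d and (Az)_1 = (Az)_2 = ⋯ = (Az)_d. -/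
open Filter MeasureTheory

set_option maxHeartbeats 1000000 in

/-- Central step of the time-averaging theorem: if `x` is an interior
solution (with `xᵢ(t) ≥ ε`) of `xᵢ'(t) = xᵢ(t)[(A y(t))ᵢ − ⟨x(t), A y(t)⟩]` with `y`
measurable, locally integrable and simplex-valued, then any limit `z` of the time averages
`(1/T_m)∫₀^{T_m} y(t) dt` along a sequence `T_m → ∞` lies in the simplex and equalizes the
payoffs: `(Az)₁ = ⋯ = (Az)_d`. -/
theorem stmt_12 (d : ℕ) (hd : 2 ≤ d) (A : Matrix (Fin d) (Fin d) ℝ) (ε : ℝ) (hε : 0 < ε)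
    (x : ℝ → Fin d → ℝ)
    (hxdiff : DifferentiableOn ℝ x (Set.Ici (0:ℝ)))
    (hxsimplex : ∀ t : ℝ, 0 ≤ t → x t ∈ stdSimplex ℝ (Fin d))
    (hxint : ∀ t : ℝ, 0 ≤ t → ∀ i, ε ≤ x t i)
    (y : ℝ → Fin d → ℝ) (hymeas : Measurable y)
    (hyloc : LocallyIntegrable y MeasureTheory.volume)
    (hysimplex : ∀ t : ℝ, y t ∈ stdSimplex ℝ (Fin d))
    (hode : ∀ t : ℝ, 0 < t →
      HasDerivAt x
        (fun i => x t i * (A.mulVec (y t) i - ∑ k, x t k * A.mulVec (y t) k)) t)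
    (Tm : ℕ → ℝ) (hTm : Tendsto Tm atTop atTop) (z : Fin d → ℝ)
    (hz : Tendsto (fun m => (Tm m)⁻¹ • ∫ t in (0:ℝ)..(Tm m), y t) atTop (nhds z)) :
    z ∈ stdSimplex ℝ (Fin d) ∧ ∀ i j, A.mulVec z i = A.mulVec z j := by
  -- basic bounds on x
  have hx1 : ∀ t : ℝ, 0 ≤ t → ∀ i, x t i ≤ 1 := by
    intro t ht i
    have h := hxsimplex t ht
    calc x t i ≤ ∑ k, x t k := Finset.single_le_sum (fun k _ => h.1 k) (Finset.mem_univ i)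
    _ = 1 := h.2
  have hxpos : ∀ t : ℝ, 0 ≤ t → ∀ i, 0 < x t i := fun t ht i => lt_of_lt_of_le hε (hxint t ht i)
  -- continuity of x components on Ici 0
  have hxc : ∀ i, ContinuousOn (fun t => x t i) (Set.Ici (0:ℝ)) := fun i =>
    (continuous_apply i).comp_continuousOn hxdiff.continuousOn
  -- interval integrability of y (vector valued) on [0,T]
  have hyI : ∀ T : ℝ, 0 ≤ T → IntervalIntegrable y volume 0 T := by
    intro T hT
    have : IntegrableOn y (Set.Icc 0 T) volume := hyloc.integrableOn_isCompact isCompact_Icc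
    exact (this.mono_set (by rw [Set.uIcc_of_le hT])).intervalIntegrable
  have hyIk : ∀ (k : Fin d) (T : ℝ), 0 ≤ T → IntervalIntegrable (fun t => y t k) volume 0 T := by
    intro k T hT
    have := (hyI T hT)
    exact ⟨(ContinuousLinearMap.proj (R := ℝ) (φ := fun _ : Fin d => ℝ) k).integrable_comp this.1,
      (ContinuousLinearMap.proj (R := ℝ) (φ := fun _ : Fin d => ℝ) k).integrable_comp this.2⟩
  -- interval integrability of components of A.mulVec (y t)
  have hAyI : ∀ (j : Fin d) (T : ℝ), 0 ≤ T →
      IntervalIntegrable (fun t => A.mulVec (y t) j) volume 0 T := by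
    intro j T hT
    have h2 := IntervalIntegrable.sum (μ := volume) (a := (0:ℝ)) (b := T) Finset.univ
      (f := fun k (t : ℝ) => A j k * y t k) (fun k _ => (hyIk k T hT).const_mul _)
    rw [show (∑ k, fun (t:ℝ) => A j k * y t k) = fun t => ∑ k, A j k * y t k from
      funext fun t => by simp] at h2
    have he : (fun t : ℝ => A.mulVec (y t) j) = fun t => ∑ k, A j k * y t k :=
      funext fun t => by simp [Matrix.mulVec, dotProduct]
    rw [he]; exact h2
  -- interval integrability of the full drift term q i
  have hqI : ∀ (i : Fin d) (T : ℝ), 0 ≤ T →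
      IntervalIntegrable
        (fun t => A.mulVec (y t) i - ∑ k, x t k * A.mulVec (y t) k) volume 0 T := by
    intro i T hT
    refine (hAyI i T hT).sub ?_
    have hterm : ∀ j : Fin d, IntervalIntegrable (fun t => x t j * A.mulVec (y t) j) volume 0 T := by
      intro j
      rw [intervalIntegrable_iff_integrableOn_Ioc_of_le hT]
      have hg : IntegrableOn (fun t => A.mulVec (y t) j) (Set.Ioc 0 T) volume := by
        have := (hAyI j T hT)
        rwa [intervalIntegrable_iff_integrableOn_Ioc_of_le hT] at this
      refine hg.bdd_mul (c := 1) ?_ ?_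
      · exact ((hxc j).mono (Set.Ioc_subset_Icc_self.trans Set.Icc_subset_Ici_self)).aestronglyMeasurable
          measurableSet_Ioc
      · filter_upwards [ae_restrict_mem measurableSet_Ioc] with t ht
        rw [Real.norm_eq_abs, abs_of_nonneg ((hxsimplex t ht.1.le).1 j)]
        exact hx1 t ht.1.le j
    have h2 := IntervalIntegrable.sum (μ := volume) (a := (0:ℝ)) (b := T) Finset.univ
      (f := fun j (t : ℝ) => x t j * A.mulVec (y t) j) (fun j _ => hterm j)
    rw [show (∑ j, fun (t:ℝ) => x t j * A.mulVec (y t) j)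
        = fun t => ∑ j, x t j * A.mulVec (y t) j from funext fun t => by simp] at h2
    exact h2
  -- FTC: integral of drift = log difference
  have key : ∀ (i : Fin d) (T : ℝ), 0 ≤ T →
      (∫ t in (0:ℝ)..T, (A.mulVec (y t) i - ∑ k, x t k * A.mulVec (y t) k)) =
        Real.log (x T i) - Real.log (x 0 i) := by
    intro i T hT
    refine intervalIntegral.integral_eq_sub_of_hasDeriv_right_of_le (f := fun t => Real.log (x t i)) hT ?_ ?_ (hqI i T hT)
    · refine ContinuousOn.log ((hxc i).mono (Set.Icc_subset_Ici_self)) ?_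
      intro t ht
      exact ne_of_gt (hxpos t ht.1 i)
    · intro t ht
      have hd1 := (hasDerivAt_pi.mp (hode t ht.1)) i
      have hne : x t i ≠ 0 := ne_of_gt (hxpos t ht.1.le i)
      have h := hd1.log hne
      have heq : x t i * (A.mulVec (y t) i - ∑ k, x t k * A.mulVec (y t) k) / x t i
          = A.mulVec (y t) i - ∑ k, x t k * A.mulVec (y t) k := by
        field_simp
      rw [heq] at h
      exact h.hasDerivWithinAt
  -- uniform bound on payoff-difference integrals
  set C : ℝ := 2 * (-Real.log ε) with hC
  have hlogb : ∀ t : ℝ, 0 ≤ t → ∀ i, Real.log ε ≤ Real.log (x t i) ∧ Real.log (x t i) ≤ 0 := by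
    intro t ht i
    constructor
    · exact Real.log_le_log hε (hxint t ht i)
    · exact Real.log_nonpos (hxpos t ht i).le (hx1 t ht i)
  have bound : ∀ (i j : Fin d) (T : ℝ), 0 ≤ T →
      |∫ t in (0:ℝ)..T, (A.mulVec (y t) i - A.mulVec (y t) j)| ≤ C := by
    intro i j T hT
    have heq : (∫ t in (0:ℝ)..T, (A.mulVec (y t) i - A.mulVec (y t) j)) =
        (Real.log (x T i) - Real.log (x 0 i)) - (Real.log (x T j) - Real.log (x 0 j)) := by
      rw [← key i T hT, ← key j T hT, ← intervalIntegral.integral_sub (hqI i T hT) (hqI j T hT)]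
      congr 1; funext t; ring
    rw [heq]
    have h1 := hlogb T hT i
    have h2 := hlogb 0 le_rfl i
    have h3 := hlogb T hT j
    have h4 := hlogb 0 le_rfl j
    rw [abs_le]
    refine ⟨by linarith [h1.1, h1.2, h2.1, h2.2, h3.1, h3.2, h4.1, h4.2], by linarith [h1.1, h1.2, h2.1, h2.2, h3.1, h3.2, h4.1, h4.2]⟩
  -- componentwise integral identities
  have hcomp : ∀ (k : Fin d) (T : ℝ), 0 ≤ T →
      (∫ t in (0:ℝ)..T, y t) k = ∫ t in (0:ℝ)..T, y t k := by
    intro k T hT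
    exact ((ContinuousLinearMap.proj (R := ℝ) (φ := fun _ : Fin d => ℝ)
      k).intervalIntegral_comp_comm (hyI T hT)).symm
  have hAcomp : ∀ (k : Fin d) (T : ℝ), 0 ≤ T →
      A.mulVec (∫ t in (0:ℝ)..T, y t) k = ∫ t in (0:ℝ)..T, A.mulVec (y t) k := by
    intro k T hT
    have : A.mulVec (∫ t in (0:ℝ)..T, y t) k = ∑ l, A k l * (∫ t in (0:ℝ)..T, y t) l := by simp [Matrix.mulVec, dotProduct]
    rw [this]
    have : (∫ t in (0:ℝ)..T, A.mulVec (y t) k) = ∫ t in (0:ℝ)..T, ∑ l, A k l * y t l :=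
      intervalIntegral.integral_congr fun t _ => by simp [Matrix.mulVec, dotProduct]
    rw [this, intervalIntegral.integral_finset_sum (fun l _ => (hyIk l T hT).const_mul _)]
    exact Finset.sum_congr rfl fun l _ => by rw [hcomp l T hT, intervalIntegral.integral_const_mul]
  -- eventually Tm m ≥ 1
  have hev : ∀ᶠ m in atTop, 1 ≤ Tm m := hTm.eventually_ge_atTop 1
  -- simplex membership
  have hzsimplex : z ∈ stdSimplex ℝ (Fin d) := by
    constructor
    · intro k
      have hk : Tendsto (fun m => ((Tm m)⁻¹ • ∫ t in (0:ℝ)..(Tm m), y t) k) atTop (nhds (z k)) :=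
        ((continuous_apply k).continuousAt.tendsto).comp hz
      refine ge_of_tendsto hk ?_
      filter_upwards [hev] with m hm
      have hT : (0:ℝ) ≤ Tm m := le_trans zero_le_one hm
      have : ((Tm m)⁻¹ • ∫ t in (0:ℝ)..(Tm m), y t) k = (Tm m)⁻¹ * ∫ t in (0:ℝ)..(Tm m), y t k := by
        rw [Pi.smul_apply, smul_eq_mul, hcomp k _ hT]
      rw [this]
      refine mul_nonneg (inv_nonneg.mpr hT) ?_
      exact intervalIntegral.integral_nonneg hT (fun u _ => (hysimplex u).1 k)
    · have hsum : Tendsto (fun m => ∑ k, ((Tm m)⁻¹ • ∫ t in (0:ℝ)..(Tm m), y t) k) atTop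
          (nhds (∑ k, z k)) := by
        refine tendsto_finset_sum _ fun k _ => ?_
        exact ((continuous_apply k).continuousAt.tendsto).comp hz
      have hone : (fun m => ∑ k, ((Tm m)⁻¹ • ∫ t in (0:ℝ)..(Tm m), y t) k) =ᶠ[atTop]
          (fun _ => (1:ℝ)) := by
        filter_upwards [hev] with m hm
        have hT : (0:ℝ) ≤ Tm m := le_trans zero_le_one hm
        have hT' : Tm m ≠ 0 := by linarith
        have : ∀ k, ((Tm m)⁻¹ • ∫ t in (0:ℝ)..(Tm m), y t) k =
            (Tm m)⁻¹ * ∫ t in (0:ℝ)..(Tm m), y t k := by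
          intro k; rw [Pi.smul_apply, smul_eq_mul, hcomp k _ hT]
        simp only [this]
        rw [← Finset.mul_sum, ← intervalIntegral.integral_finset_sum (fun k _ => hyIk k _ hT)]
        have : (∫ t in (0:ℝ)..(Tm m), ∑ k, y t k) = ∫ t in (0:ℝ)..(Tm m), (1:ℝ) := by
          refine intervalIntegral.integral_congr fun t _ => (hysimplex t).2
        rw [this]
        simp [hT']
      exact tendsto_nhds_unique (hsum.congr' hone) tendsto_const_nhds
  refine ⟨hzsimplex, ?_⟩
  intro i j
  -- the payoff-difference functional
  have hcont : Continuous fun v : Fin d → ℝ => A.mulVec v i - A.mulVec v j := by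
    have : ∀ k : Fin d, Continuous fun v : Fin d → ℝ => A.mulVec v k := by
      intro k
      have : (fun v : Fin d → ℝ => A.mulVec v k) = fun v => ∑ l, A k l * v l := by funext v; simp [Matrix.mulVec, dotProduct]
      rw [this]
      exact continuous_finset_sum _ fun l _ => (continuous_const.mul (continuous_apply l))
    exact (this i).sub (this j)
  have h1 : Tendsto (fun m => A.mulVec ((Tm m)⁻¹ • ∫ t in (0:ℝ)..(Tm m), y t) i -
      A.mulVec ((Tm m)⁻¹ • ∫ t in (0:ℝ)..(Tm m), y t) j) atTop
      (nhds (A.mulVec z i - A.mulVec z j)) := (hcont.continuousAt.tendsto).comp hz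
  have h2 : Tendsto (fun m => A.mulVec ((Tm m)⁻¹ • ∫ t in (0:ℝ)..(Tm m), y t) i -
      A.mulVec ((Tm m)⁻¹ • ∫ t in (0:ℝ)..(Tm m), y t) j) atTop (nhds 0) := by
    have hC0 : Tendsto (fun m => C * (Tm m)⁻¹) atTop (nhds 0) := by
      have := (tendsto_inv_atTop_zero.comp hTm).const_mul C
      simpa using this
    refine squeeze_zero_norm' ?_ hC0
    filter_upwards [hev] with m hm
    have hT : (0:ℝ) ≤ Tm m := le_trans zero_le_one hm
    have heq : A.mulVec ((Tm m)⁻¹ • ∫ t in (0:ℝ)..(Tm m), y t) i -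
        A.mulVec ((Tm m)⁻¹ • ∫ t in (0:ℝ)..(Tm m), y t) j =
        (Tm m)⁻¹ * ∫ t in (0:ℝ)..(Tm m), (A.mulVec (y t) i - A.mulVec (y t) j) := by
      rw [Matrix.mulVec_smul]
      rw [intervalIntegral.integral_sub (hAyI i _ hT) (hAyI j _ hT)]
      rw [Pi.smul_apply, Pi.smul_apply, smul_eq_mul, smul_eq_mul, ← mul_sub]
      rw [hAcomp i _ hT, hAcomp j _ hT]
    rw [heq, Real.norm_eq_abs, abs_mul, abs_of_nonneg (inv_nonneg.mpr hT), mul_comm]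
    exact mul_le_mul_of_nonneg_right (bound i j _ hT) (inv_nonneg.mpr hT)
  have := tendsto_nhds_unique h1 h2
  linarith
end

section
/- Let a, b, c, d be real numbers with b > d and c > a, and set e = (b−d)/((b−d)+(c−a)) ∈ (0,1) and β = e(c−a) > 0. Let r > 0 and let K : [−r,0] → ℝ be a continuous nonnegative kernel with ∫_{−r}^0 K(s) ds = 1. If ∫_{−r}^0 (−s)·K(s) ds < 1/β (i.e., the average delay is less than 1/(e(c−a))), then every λ ∈ ℂ satisfying the characteristic equation λ + β∫_{−r}^0 K(s)·e^{λ s} ds = 0 has Re λ < 0. -/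
/-!
Suppose `Re λ ≥ 0`. Since `exp` is `1`-Lipschitz on the closed left half-plane,
`‖1 - e^{λs}‖ ≤ ‖λ‖ (-s)` for `s ≤ 0`. Using `∫ K = 1`, the characteristic equation reads
`λ + β = β ∫ K(s) (1 - e^{λs}) ds`, so `‖λ + β‖ ≤ β τ ‖λ‖ ≤ ‖λ‖` with `τ` the average delay.
But `‖λ + β‖ > ‖λ‖` whenever `Re λ ≥ 0` and `β > 0`.
-/

theorem Complex.norm_exp_sub_one_le_norm_of_re_nonpos {z : ℂ} (hz : z.re ≤ 0) :
    ‖exp z - 1‖ ≤ ‖z‖ := by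
  have h := (convex_halfSpace_re_le (0 : ℝ)).norm_image_sub_le_of_norm_deriv_le
    (f := exp) (C := 1) (fun w _ => differentiableAt_exp)
    (fun w hw => by rw [deriv_exp, norm_exp, Real.exp_le_one_iff]; exact hw)
    (x := 0) (y := z) (by simp) hz
  simpa using h

theorem Complex.norm_lt_norm_add_ofReal {z : ℂ} (hz : 0 ≤ z.re) {β : ℝ} (hβ : 0 < β) :
    ‖z‖ < ‖z + β‖ := by
  have hsq : ‖z‖ ^ 2 < ‖z + β‖ ^ 2 := by
    simp only [Complex.sq_norm, Complex.normSq_apply, Complex.add_re, Complex.add_im,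
      Complex.ofReal_re, Complex.ofReal_im, add_zero]
    nlinarith
  exact lt_of_pow_lt_pow_left₀ 2 (norm_nonneg _) hsq

theorem norm_one_sub_exp_mul_le {lam : ℂ} (hlam : 0 ≤ lam.re) {s : ℝ} (hs : s ≤ 0) :
    ‖1 - Complex.exp (lam * s)‖ ≤ ‖lam‖ * -s := by
  have hre : (lam * s).re ≤ 0 := by
    simpa using mul_nonpos_of_nonneg_of_nonpos hlam hs
  rw [norm_sub_rev, ← Real.norm_of_nonpos hs, ← Complex.norm_real, ← norm_mul]
  exact Complex.norm_exp_sub_one_le_norm_of_re_nonpos hre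

section Kernel

variable {K : ℝ → ℝ} {r : ℝ}

theorem integral_neg_mul_nonneg (hr : 0 ≤ r) (hK0 : ∀ s ∈ Set.Icc (-r) 0, 0 ≤ K s) :
    0 ≤ ∫ s in (-r)..(0:ℝ), (-s) * K s :=
  intervalIntegral.integral_nonneg (by linarith) fun s hs =>
    mul_nonneg (neg_nonneg.mpr hs.2) (hK0 s hs)

theorem integral_ofReal_mul_exp_eq_one_sub (hr : 0 ≤ r) (hK : ContinuousOn K (Set.Icc (-r) 0))
    (hK1 : (∫ s in (-r)..(0:ℝ), K s) = 1) (lam : ℂ) :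
    (∫ s in (-r)..(0:ℝ), (K s : ℂ) * Complex.exp (lam * s))
      = 1 - ∫ s in (-r)..(0:ℝ), (K s : ℂ) * (1 - Complex.exp (lam * s)) := by
  have hr' : -r ≤ 0 := by linarith
  have hKC : ContinuousOn (fun s : ℝ => (K s : ℂ)) (Set.Icc (-r) 0) := by fun_prop
  have hKexp : ContinuousOn (fun s : ℝ => (K s : ℂ) * Complex.exp (lam * s))
      (Set.Icc (-r) 0) := by fun_prop
  simp only [mul_sub, mul_one]
  rw [intervalIntegral.integral_sub (hKC.intervalIntegrable_of_Icc hr')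
    (hKexp.intervalIntegrable_of_Icc hr'), intervalIntegral.integral_ofReal, hK1,
    Complex.ofReal_one, sub_sub_cancel]

theorem norm_integral_mul_one_sub_exp_le (hr : 0 ≤ r) (hK : ContinuousOn K (Set.Icc (-r) 0))
    (hK0 : ∀ s ∈ Set.Icc (-r) 0, 0 ≤ K s) {lam : ℂ} (hlam : 0 ≤ lam.re) :
    ‖∫ s in (-r)..(0:ℝ), (K s : ℂ) * (1 - Complex.exp (lam * s))‖
      ≤ ‖lam‖ * ∫ s in (-r)..(0:ℝ), (-s) * K s := by
  have hr' : -r ≤ 0 := by linarith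
  rw [← intervalIntegral.integral_const_mul]
  refine intervalIntegral.norm_integral_le_of_norm_le hr' (Filter.Eventually.of_forall
    fun s hs => ?_) ?_
  · have hs' := Set.Ioc_subset_Icc_self hs
    rw [norm_mul, Complex.norm_real, Real.norm_of_nonneg (hK0 s hs')]
    nlinarith [norm_one_sub_exp_mul_le hlam hs'.2, hK0 s hs']
  · refine ContinuousOn.intervalIntegrable_of_Icc hr' ?_
    fun_prop

end Kernel

theorem stmt_15_general (β : ℝ)
    (r : ℝ) (hr : 0 < r) (K : ℝ → ℝ)
    (hKcont : ContinuousOn K (Set.Icc (-r) 0))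
    (hKnonneg : ∀ s ∈ Set.Icc (-r) 0, 0 ≤ K s)
    (hKprob : (∫ s in (-r)..(0:ℝ), K s) = 1)
    (havg : (∫ s in (-r)..(0:ℝ), (-s) * K s) < 1 / β) :
    ∀ lam : ℂ,
      lam + (β : ℂ) * (∫ s in (-r)..(0:ℝ), (K s : ℂ) * Complex.exp (lam * (s : ℂ))) = 0 →
      lam.re < 0 := by
  intro lam hroot
  by_contra! hlam
  set τ := ∫ s in (-r)..(0:ℝ), (-s) * K s
  have hτ : 0 ≤ τ := integral_neg_mul_nonneg hr.le hKnonneg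
  have hβ : 0 < β := one_div_pos.mp (hτ.trans_lt havg)
  have hβτ : β * τ < 1 := by rwa [lt_div_iff₀ hβ, mul_comm] at havg
  set M := ∫ s in (-r)..(0:ℝ), (K s : ℂ) * (1 - Complex.exp (lam * s))
  have hM : lam + β = β * M := by
    rw [integral_ofReal_mul_exp_eq_one_sub hr.le hKcont hKprob] at hroot
    linear_combination hroot
  have hMτ : ‖M‖ ≤ ‖lam‖ * τ := norm_integral_mul_one_sub_exp_le hr.le hKcont hKnonneg hlam
  refine (Complex.norm_lt_norm_add_ofReal hlam hβ).not_ge ?_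
  calc ‖lam + β‖ = β * ‖M‖ := by
        rw [hM, norm_mul, Complex.norm_real, Real.norm_of_nonneg hβ.le]
    _ ≤ β * (‖lam‖ * τ) := by gcongr
    _ ≤ ‖lam‖ := by nlinarith [norm_nonneg lam]

/-- For a snowdrift game (`b > d`, `c > a`) with interior equilibrium
`e = (b−d)/((b−d)+(c−a))` and `β = e(c−a)`, if the average delay `∫₀^r s K(s) ds` of the
continuous nonnegative kernel `K` (a probability density on `[−r,0]`) is less than `1/β`,
then every root `λ` of the characteristic equation `λ + β ∫_{−r}^0 K(s) e^{λ s} ds = 0`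
has negative real part. -/
theorem stmt_15 (a b c d : ℝ) (hbd : d < b) (hca : a < c)
    (e β : ℝ) (he : e = (b - d) / ((b - d) + (c - a))) (hβ : β = e * (c - a))
    (r : ℝ) (hr : 0 < r) (K : ℝ → ℝ)
    (hKcont : ContinuousOn K (Set.Icc (-r) 0))
    (hKnonneg : ∀ s ∈ Set.Icc (-r) 0, 0 ≤ K s)
    (hKprob : (∫ s in (-r)..(0:ℝ), K s) = 1)
    (havg : (∫ s in (-r)..(0:ℝ), (-s) * K s) < 1 / β) :
    ∀ lam : ℂ,
      lam + (β : ℂ) * (∫ s in (-r)..(0:ℝ), (K s : ℂ) * Complex.exp (lam * (s : ℂ))) = 0 →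
      lam.re < 0 :=
  stmt_15_general β r hr K hKcont hKnonneg hKprob havg
end

section
/- Let β > 0 and let r be a real number with 0 ≤ r < π/(2β). Then every λ ∈ ℂ satisfying λ + β·e^{−λ r} = 0 has Re λ < 0. -/
/-!
If `λ = -β e^{-λ r}` had `Re λ ≥ 0`, then `|λ| = β e^{-r Re λ} ≤ β`, so `|r Im λ| ≤ r β < π/2` and
`cos (r Im λ) > 0`; but then `Re λ = -β e^{-r Re λ} cos (r Im λ) < 0`.
-/

open Complex

section DelayCharacteristicRoot

variable {β r : ℝ} {lam : ℂ}

lemma re_eq_of_add_mul_exp_neg_mul_eq_zero (h : lam + β * exp (-(lam * r)) = 0) :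
    lam.re = -(β * (Real.exp (-(lam.re * r)) * Real.cos (lam.im * r))) := by
  have hlam : lam = -(β * exp (-(lam * r))) := by linear_combination h
  have := congrArg re hlam
  simpa [exp_re] using this

lemma norm_eq_of_add_mul_exp_neg_mul_eq_zero (h : lam + β * exp (-(lam * r)) = 0) :
    ‖lam‖ = |β| * Real.exp (-(lam.re * r)) := by
  conv_lhs => rw [show lam = -(β * exp (-(lam * r))) by linear_combination h]
  simp [norm_exp]

lemma norm_le_of_add_mul_exp_neg_mul_eq_zero (hr : 0 ≤ r) (hre : 0 ≤ lam.re)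
    (h : lam + β * exp (-(lam * r)) = 0) : ‖lam‖ ≤ |β| := by
  rw [norm_eq_of_add_mul_exp_neg_mul_eq_zero h]
  exact mul_le_of_le_one_right (abs_nonneg β)
    (Real.exp_le_one_iff.mpr (neg_nonpos.mpr (mul_nonneg hre hr)))

end DelayCharacteristicRoot

/-- For `β > 0` and a delay `0 ≤ r < π/(2β)`, every root `λ` of the
characteristic equation `λ + β e^{-λ r} = 0` of the linearized discrete-delay replicator
equation satisfies `Re λ < 0`. -/
theorem stmt_16 (β r : ℝ) (hβ : 0 < β) (hr0 : 0 ≤ r) (hr : r < Real.pi / (2 * β)) :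
    ∀ lam : ℂ, lam + (β : ℂ) * Complex.exp (-(lam * (r : ℂ))) = 0 → lam.re < 0 := by
  intro lam h
  by_contra! hre
  have him : |lam.im| ≤ β := by
    simpa [abs_of_pos hβ] using
      (abs_im_le_norm lam).trans (norm_le_of_add_mul_exp_neg_mul_eq_zero hr0 hre h)
  have hrβ : β * r < Real.pi / 2 := by
    rw [lt_div_iff₀ (by positivity)] at hr
    linarith
  have hphase : |lam.im * r| < Real.pi / 2 := by
    rw [abs_mul, abs_of_nonneg hr0]
    exact (mul_le_mul_of_nonneg_right him hr0).trans_lt hrβ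
  have hcos : 0 < Real.cos (lam.im * r) :=
    Real.cos_pos_of_mem_Ioo (abs_lt.mp hphase)
  have := re_eq_of_add_mul_exp_neg_mul_eq_zero h
  have : 0 < β * (Real.exp (-(lam.re * r)) * Real.cos (lam.im * r)) := by positivity
  linarith
end

section
/- Let β > 0 and let r be a real number with r > π/(2β). Then there exists λ ∈ ℂ with λ + β·e^{−λ r} = 0 and Re λ > 0. -/
/-!
Substituting `μ = λ r` turns the equation into `μ + a e^{-μ} = 0` with `a = β r > π / 2`.
For `μ = x + i y` this holds as soon as `x = -y cot y` and `a = y e^{x} / sin y =: g(y)`.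
Since `g(π / 2) = π / 2` and `g(y) → ∞` as `y → π⁻`, the intermediate value theorem gives
`y ∈ (π / 2, π)` with `g(y) = a`, and there `cot y < 0`, so `x > 0`.
-/

open Real Filter Set Topology

noncomputable def delayRootRe (y : ℝ) : ℝ := -(y * cot y)

noncomputable def delayGain (y : ℝ) : ℝ := y * exp (delayRootRe y) / sin y

lemma add_delayGain_mul_exp_neg_eq_zero {y : ℝ} (hy : sin y ≠ 0) :
    let μ : ℂ := delayRootRe y + y * Complex.I
    μ + delayGain y * Complex.exp (-μ) = 0 := by
  intro μ
  have hexp : Complex.exp (-μ) = exp (-delayRootRe y) * (cos y - sin y * Complex.I) := by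
    rw [show -μ = ((-delayRootRe y : ℝ) : ℂ) + ((-y : ℝ) : ℂ) * Complex.I by push_cast; ring,
      Complex.exp_add, Complex.exp_mul_I, ← Complex.ofReal_exp, ← Complex.ofReal_cos,
      ← Complex.ofReal_sin]
    push_cast [Real.cos_neg, Real.sin_neg]
    ring
  have hgain : delayGain y * exp (-delayRootRe y) = y / sin y := by
    rw [delayGain, exp_neg]; field_simp
  have hre : delayRootRe y = -(y / sin y * cos y) := by
    rw [delayRootRe, cot_eq_cos_div_sin]; ring
  have hs : (sin y : ℂ) ≠ 0 := by exact_mod_cast hy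
  rw [hexp, ← mul_assoc, ← Complex.ofReal_mul, hgain]
  simp only [μ, hre, Complex.ofReal_neg, Complex.ofReal_mul, Complex.ofReal_div]
  field_simp
  ring

lemma delayRootRe_pos {y : ℝ} (h₁ : π / 2 < y) (h₂ : y < π) : 0 < delayRootRe y := by
  have hs : 0 < sin y := sin_pos_of_pos_of_lt_pi (by linarith [pi_pos]) h₂
  have hc : cos y < 0 := cos_neg_of_pi_div_two_lt_of_lt h₁ (by linarith)
  rw [delayRootRe, cot_eq_cos_div_sin, neg_pos]
  exact mul_neg_of_pos_of_neg (by linarith [pi_pos]) (div_neg_of_neg_of_pos hc hs)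

lemma delayGain_pi_div_two : delayGain (π / 2) = π / 2 := by
  simp [delayGain, delayRootRe, cot_eq_cos_div_sin]

lemma continuousOn_delayGain : ContinuousOn delayGain (Ioo 0 π) := by
  have hs : ∀ y ∈ Ioo 0 π, sin y ≠ 0 := fun y hy => (sin_pos_of_pos_of_lt_pi hy.1 hy.2).ne'
  unfold delayGain delayRootRe
  simp only [cot_eq_cos_div_sin]
  fun_prop (disch := assumption)

lemma tendsto_delayGain_nhdsLT_pi : Tendsto delayGain (𝓝[<] π) atTop := by
  have hsin : Tendsto sin (𝓝[<] π) (𝓝[>] 0) := by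
    refine tendsto_nhdsWithin_iff.2 ⟨?_, ?_⟩
    · simpa using (continuous_sin.tendsto π).mono_left nhdsWithin_le_nhds
    · filter_upwards [Ioo_mem_nhdsLT pi_pos] with y hy using sin_pos_of_pos_of_lt_pi hy.1 hy.2
  have hinv : Tendsto (fun y => (sin y)⁻¹) (𝓝[<] π) atTop := tendsto_inv_nhdsGT_zero.comp hsin
  have hnum : Tendsto (fun y => -(y * cos y)) (𝓝[<] π) (𝓝 π) := by
    simpa using ((by fun_prop : Continuous fun y => -(y * cos y)).tendsto π).mono_left
      nhdsWithin_le_nhds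
  have hexp : Tendsto (fun y => exp (-(y * cos y) * (sin y)⁻¹)) (𝓝[<] π) atTop :=
    tendsto_exp_atTop.comp (hnum.pos_mul_atTop pi_pos hinv)
  have hid : Tendsto id (𝓝[<] π) (𝓝 π) := tendsto_id.mono_left nhdsWithin_le_nhds
  refine ((hid.pos_mul_atTop pi_pos hexp).atTop_mul_atTop₀ hinv).congr fun y => ?_
  simp [delayGain, delayRootRe, cot_eq_cos_div_sin, div_eq_mul_inv, neg_mul, mul_assoc]

lemma exists_delayGain_eq {a : ℝ} (ha : π / 2 < a) : ∃ y ∈ Ioo (π / 2) π, delayGain y = a := by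
  obtain ⟨y₁, ⟨hy₁, hy₁π⟩, hay₁⟩ : ∃ y₁ ∈ Ioo (π / 2) π, a < delayGain y₁ :=
    ((eventually_mem_set.2 (Ioo_mem_nhdsLT (by linarith [pi_pos]))).and
      (tendsto_delayGain_nhdsLT_pi.eventually_gt_atTop a)).exists
  have hcont : ContinuousOn delayGain (Icc (π / 2) y₁) :=
    continuousOn_delayGain.mono (Icc_subset_Ioo (by linarith [pi_pos]) hy₁π)
  obtain ⟨y, ⟨hy, hyy₁⟩, hya⟩ := intermediate_value_Ioo hy₁.le hcont
    (by rw [delayGain_pi_div_two]; exact ⟨ha, hay₁⟩)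
  exact ⟨y, ⟨hy, hyy₁.trans hy₁π⟩, hya⟩

lemma exists_add_mul_exp_neg_eq_zero {a : ℝ} (ha : π / 2 < a) :
    ∃ μ : ℂ, μ + a * Complex.exp (-μ) = 0 ∧ 0 < μ.re := by
  obtain ⟨y, ⟨hy, hyπ⟩, rfl⟩ := exists_delayGain_eq ha
  refine ⟨delayRootRe y + y * Complex.I,
    add_delayGain_mul_exp_neg_eq_zero (sin_pos_of_pos_of_lt_pi (by linarith [pi_pos]) hyπ).ne', ?_⟩
  simpa using delayRootRe_pos hy hyπ

/-- For `β > 0` and a delay `r > π/(2β)`, the characteristic equation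
`λ + β e^{-λ r} = 0` of the linearized discrete-delay replicator equation has a root with
positive real part. -/
theorem stmt_17 (β r : ℝ) (hβ : 0 < β) (hr : Real.pi / (2 * β) < r) :
    ∃ lam : ℂ, lam + (β : ℂ) * Complex.exp (-(lam * (r : ℂ))) = 0 ∧ 0 < lam.re := by
  have hr₀ : 0 < r := lt_trans (by positivity) hr
  obtain ⟨μ, hμ, hμre⟩ := exists_add_mul_exp_neg_eq_zero (a := β * r) (by
    rw [div_lt_iff₀ (by positivity)] at hr; linarith)
  have hr₀' : (r : ℂ) ≠ 0 := by exact_mod_cast hr₀.ne'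
  refine ⟨μ / r, ?_, by simpa using div_pos hμre hr₀⟩
  rw [div_mul_cancel₀ μ hr₀']
  field_simp
  push_cast at hμ
  linear_combination hμ
end
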